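/- arXiv:2504.02816 — 7 statements merged into one kernel-verified Lean document; each statement's English description precedes it below -/
import Mathlib

section
/- Let G(A,B) be a bipartite graph satisfying the double Hall property with both sides A and B infinite. If every vertex of A has only finitely many neighbors, then A is countable. -/
/-- The set of vertices having at least two neighbors in `X`. -/
def N2 {V : Type*} (G : SimpleGraph V) (X : Set V) : Set V :=
  {v | ∃ x ∈ X, ∃ y ∈ X, x ≠ y ∧ G.Adj v x ∧ G.Adj v y}

/-- `G` is bipartite with sides `A` and `B`. -/
def BipartiteWith {V : Type*} (G : SimpleGraph V) (A B : Set V) : Prop :=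
  (∀ v, v ∈ A ∨ v ∈ B) ∧ Disjoint A B ∧
    ∀ ⦃x y⦄, G.Adj x y → (x ∈ A ∧ y ∈ B) ∨ (x ∈ B ∧ y ∈ A)

/-- The double Hall property for the side `A`. -/
def DHP {V : Type*} (G : SimpleGraph V) (A : Set V) : Prop :=
  2 ≤ Cardinal.mk A ∧
    ∀ X : Set V, X ⊆ A → 2 ≤ Cardinal.mk X → Cardinal.mk X ≤ Cardinal.mk (N2 G X)

/-!
Suppose `A` were uncountable. Since neighbourhoods in `A` are finite, uncountably many vertices
of `A` have degree at most some `n`. Repeatedly passing to the uncountably many of them adjacent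
to a fixed vertex `b` (and adding `b` to a finite set `F`) lowers the number of neighbours outside
`F`, so after at most `n` steps we reach a finite `F` and an uncountable `Y ⊆ A` such that every
vertex outside `F` has only countably many neighbours in `Y`. Greedily avoiding these countable
sets we pick `|F| + 2` vertices of `Y` whose pairwise common neighbours all lie in `F`, so that
`N²` of this set has at most `|F|` elements, against the double Hall property.
-/

open Set

section

variable {V : Type*} (G : SimpleGraph V)

def SparseOutside (Y F : Set V) : Prop :=
  ∀ b ∉ F, {a ∈ Y | G.Adj b a}.Countable

variable {G} in
lemma DHP.card_le_of_N2_subset {A : Set V} (hdhp : DHP G A) {X F : Finset V}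
    (hXA : ↑X ⊆ A) (hX : 2 ≤ X.card) (hXF : N2 G X ⊆ F) : X.card ≤ F.card := by
  simpa using (hdhp.2 X hXA (by simpa using hX)).trans (Cardinal.mk_le_mk_of_subset hXF)

lemma N2_insert_subset (a : V) (X : Set V) :
    N2 G (insert a X) ⊆ N2 G X ∪ {v | G.Adj v a ∧ ∃ x ∈ X, G.Adj v x} := by
  rintro v ⟨x, hx, y, hy, hxy, hvx, hvy⟩
  rcases hx with rfl | hx <;> rcases hy with rfl | hy
  · exact absurd rfl hxy
  · exact Or.inr ⟨hvx, y, hy, hvy⟩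
  · exact Or.inr ⟨hvy, x, hx, hvx⟩
  · exact Or.inl ⟨x, hx, y, hy, hxy, hvx, hvy⟩

variable {G} in
lemma SparseOutside.exists_finset_N2_subset {Y F : Set V} (hsparse : SparseOutside G Y F)
    (hY : ¬ Y.Countable) (hloc : ∀ a ∈ Y, (G.neighborSet a).Countable) (m : ℕ) :
    ∃ X : Finset V, ↑X ⊆ Y ∧ X.card = m ∧ N2 G X ⊆ F := by
  classical
  induction m with
  | zero => exact ⟨∅, by simp, rfl, by simp [N2]⟩
  | succ m ih =>
    obtain ⟨X, hXY, rfl, hXF⟩ := ih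
    set W := ⋃ b ∈ (⋃ x ∈ (X : Set V), G.neighborSet x) \ F, {a ∈ Y | G.Adj b a}
    have hW : W.Countable :=
      ((X.countable_toSet.biUnion fun x hx => hloc x (hXY hx)).mono sdiff_subset).biUnion
        fun b hb => hsparse b hb.2
    obtain ⟨a, haY, haWX⟩ : (Y \ (W ∪ X)).Nonempty :=
      sdiff_nonempty.mpr fun hsub => hY ((hW.union X.countable_toSet).mono hsub)
    have haX : a ∉ X := fun h => haWX (Or.inr h)
    refine ⟨insert a X, ?_, Finset.card_insert_of_notMem haX, ?_⟩
    · rw [Finset.coe_insert]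
      exact insert_subset haY hXY
    · rw [Finset.coe_insert]
      refine (N2_insert_subset G a X).trans (union_subset hXF ?_)
      rintro v ⟨hva, x, hx, hvx⟩
      by_contra hvF
      exact haWX (Or.inl (mem_biUnion ⟨mem_biUnion hx hvx.symm, hvF⟩ ⟨haY, hva⟩))

lemma exists_uncountable_sparseOutside (n : ℕ) (F : Finset V) (Y : Set V) (hY : ¬ Y.Countable)
    (hdeg : ∀ a ∈ Y, (G.neighborSet a \ F).encard ≤ n) :
    ∃ (F' : Finset V) (Y' : Set V), Y' ⊆ Y ∧ ¬ Y'.Countable ∧ SparseOutside G Y' F' := by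
  classical
  induction n generalizing F Y with
  | zero =>
    refine ⟨F, Y, subset_rfl, hY, fun b hb => countable_empty.mono ?_⟩
    rintro a ⟨haY, hab⟩
    have h := hdeg a haY
    rw [Nat.cast_zero, nonpos_iff_eq_zero, encard_eq_zero] at h
    have hbN : b ∈ G.neighborSet a \ F := ⟨hab.symm, hb⟩
    rwa [h] at hbN
  | succ n ih =>
    by_cases hb : ∃ b ∉ F, ¬ {a ∈ Y | G.Adj b a}.Countable
    · obtain ⟨b, hbF, hbY⟩ := hb
      obtain ⟨F', Y', hY'sub, hY', hsparse⟩ := ih (insert b F) _ hbY fun a ⟨haY, hab⟩ => by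
        have hdrop := encard_sdiff_singleton_add_one
          (show b ∈ G.neighborSet a \ F from ⟨hab.symm, hbF⟩)
        rw [Finset.coe_insert, insert_eq, union_comm, ← sdiff_sdiff]
        have h := hdeg a haY
        rw [← hdrop, Nat.cast_succ] at h
        exact (WithTop.add_le_add_iff_right WithTop.one_ne_top).mp h
      exact ⟨F', Y', hY'sub.trans (sep_subset _ _), hY', hsparse⟩
    · push Not at hb
      exact ⟨F, Y, subset_rfl, hY, hb⟩

end

theorem stmt1_general {V : Type*} (G : SimpleGraph V) (A : Set V) (hdhp : DHP G A)
    (hlf : ∀ v ∈ A, (G.neighborSet v).Finite) :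
    A.Countable := by
  by_contra hA
  obtain ⟨n, hn⟩ : ∃ n : ℕ, ¬ {a ∈ A | (G.neighborSet a).encard ≤ n}.Countable := by
    by_contra! h
    refine hA ((countable_iUnion h).mono fun a ha => ?_)
    exact mem_iUnion.mpr ⟨(G.neighborSet a).ncard, ha, (hlf a ha).cast_ncard_eq.ge⟩
  obtain ⟨F, Y, hYsub, hY, hsparse⟩ :=
    exists_uncountable_sparseOutside G n ∅ _ hn fun a ha => by simpa using ha.2
  obtain ⟨X, hXY, hXcard, hXF⟩ := hsparse.exists_finset_N2_subset hY
    (fun a ha => (hlf a (hYsub ha).1).countable) (F.card + 2)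
  have := hdhp.card_le_of_N2_subset (hXY.trans fun a ha => (hYsub ha).1) (by omega) hXF
  omega

theorem stmt1 {V : Type*} (G : SimpleGraph V) (A B : Set V)
    (hbip : BipartiteWith G A B) (hdhp : DHP G A)
    (hA : A.Infinite) (hB : B.Infinite)
    (hlf : ∀ v ∈ A, (G.neighborSet v).Finite) :
    A.Countable :=
  stmt1_general G A hdhp hlf
end

section
/- There exists a countably infinite bipartite graph Γ(S,R) satisfying the double Hall property, whose side S is locally finite (every vertex of S has finite degree), such that every subgraph H of Γ in which every vertex has degree exactly 2 and whose vertex set contains all of S has infinitely many connected components. -/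
def DegEq2 {V : Type*} {G : SimpleGraph V} (H : G.Subgraph) (v : V) : Prop :=
  ∃ a b, a ≠ b ∧ H.neighborSet v = {a, b}

def DegLe2 {V : Type*} {G : SimpleGraph V} (H : G.Subgraph) (v : V) : Prop :=
  ∀ a ∈ H.neighborSet v, ∀ b ∈ H.neighborSet v, ∀ c ∈ H.neighborSet v,
    a = b ∨ a = c ∨ b = c

def DegEq1 {V : Type*} {G : SimpleGraph V} (H : G.Subgraph) (v : V) : Prop :=
  ∃ a, H.neighborSet v = {a}


/-
The S-side is the binary tree of finite 0-1 words; each node `t` carries `2 ^ (t.length + 2) - 1`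
hubs on the R-side, each joined to every word extending `t`. Two words with longest common prefix
`t` have all hubs of `t` as common neighbours, which gives the double Hall property.

A spanning 2-regular subgraph `H` with only `c` components is covered by `2c` non-backtracking
walks, two leaving one vertex of each component. Fix a depth `δ` with `2 ^ δ > 2c`. There are
finitely many vertices above depth `δ`, so a walk either has finite range or eventually avoids
them, and then it cannot leave the subtree it is in. Hence each walk meets at most one of the
`2 ^ δ` subtrees at depth `δ` infinitely often, although each of them contains infinitely many
words, all in `H`.
-/

open Set Function

theorem SimpleGraph.Reachable.mem_of_adj_mem {W : Type*} {Γ : SimpleGraph W} {s : Set W}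
    (hs : ∀ x y, x ∈ s → Γ.Adj x y → y ∈ s) {u v : W} (h : Γ.Reachable u v) (hu : u ∈ s) :
    v ∈ s := by
  obtain ⟨p⟩ := h
  induction p with
  | nil => exact hu
  | cons hxy _ ih => exact ih (hs _ _ hu hxy)

namespace SimpleGraph.Subgraph

variable {V : Type*} {G : SimpleGraph V} (H : G.Subgraph)

open Classical in
noncomputable def otherNeighbor (v u : V) : V :=
  if h : ∃ w, w ≠ u ∧ H.Adj v w then h.choose else u

noncomputable def nbWalk (v₀ v₁ : V) : ℕ → V
  | 0 => v₀
  | 1 => v₁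
  | n + 2 => H.otherNeighbor (nbWalk v₀ v₁ (n + 1)) (nbWalk v₀ v₁ n)

variable {H}

theorem nbWalk_add_two (v₀ v₁ : V) (n : ℕ) :
    H.nbWalk v₀ v₁ (n + 2) = H.otherNeighbor (H.nbWalk v₀ v₁ (n + 1)) (H.nbWalk v₀ v₁ n) :=
  rfl

theorem neighborSet_eq_pair_otherNeighbor {v u : V} (hv : DegEq2 H v) (hu : H.Adj v u) :
    H.neighborSet v = {u, H.otherNeighbor v u} := by
  obtain ⟨a, b, hab, hN⟩ := hv
  have hu' : u ∈ H.neighborSet v := hu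
  have hex : ∃ w, w ≠ u ∧ H.Adj v w := by
    rw [hN] at hu'
    rcases hu' with rfl | rfl
    · exact ⟨b, hab.symm, show b ∈ H.neighborSet v by simp [hN]⟩
    · exact ⟨a, hab, show a ∈ H.neighborSet v by simp [hN]⟩
  obtain ⟨hne, hw⟩ := hex.choose_spec
  have hw' : hex.choose ∈ H.neighborSet v := hw
  rw [otherNeighbor, dif_pos hex]
  rw [hN] at hu' hw' ⊢
  rcases hu' with rfl | rfl <;> rcases hw' with h | h <;> simp_all [Set.pair_comm]

theorem finite_neighborSet (hH : ∀ v ∈ H.verts, DegEq2 H v) (v : V) :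
    (H.neighborSet v).Finite := by
  by_cases hv : v ∈ H.verts
  · obtain ⟨a, b, -, hN⟩ := hH v hv
    rw [hN]
    exact toFinite _
  · exact finite_empty.subset fun w hw => hv (H.edge_vert hw)

variable {v₀ v₁ : V}

theorem adj_nbWalk (hH : ∀ v ∈ H.verts, DegEq2 H v) (h : H.Adj v₀ v₁) :
    ∀ n, H.Adj (H.nbWalk v₀ v₁ n) (H.nbWalk v₀ v₁ (n + 1))
  | 0 => h
  | n + 1 => by
    have ih := adj_nbWalk hH h n
    show H.nbWalk v₀ v₁ (n + 2) ∈ H.neighborSet _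
    rw [neighborSet_eq_pair_otherNeighbor (hH _ ih.snd_mem) ih.symm]
    exact Or.inr rfl

theorem neighborSet_nbWalk_succ (hH : ∀ v ∈ H.verts, DegEq2 H v) (h : H.Adj v₀ v₁) (n : ℕ) :
    H.neighborSet (H.nbWalk v₀ v₁ (n + 1)) = {H.nbWalk v₀ v₁ n, H.nbWalk v₀ v₁ (n + 2)} :=
  have hn := adj_nbWalk hH h n
  neighborSet_eq_pair_otherNeighbor (hH _ hn.snd_mem) hn.symm

theorem nbWalk_add_eq_of_eq {n m : ℕ} (h₀ : H.nbWalk v₀ v₁ n = H.nbWalk v₀ v₁ m)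
    (h₁ : H.nbWalk v₀ v₁ (n + 1) = H.nbWalk v₀ v₁ (m + 1)) (k : ℕ) :
    H.nbWalk v₀ v₁ (n + k) = H.nbWalk v₀ v₁ (m + k) := by
  suffices ∀ k, H.nbWalk v₀ v₁ (n + k) = H.nbWalk v₀ v₁ (m + k) ∧
      H.nbWalk v₀ v₁ (n + k + 1) = H.nbWalk v₀ v₁ (m + k + 1) from (this k).1
  intro k
  induction k with
  | zero => exact ⟨h₀, h₁⟩
  | succ k ih =>
    refine ⟨ih.2, ?_⟩
    rw [show n + (k + 1) + 1 = n + k + 2 by omega, show m + (k + 1) + 1 = m + k + 2 by omega,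
      nbWalk_add_two, nbWalk_add_two, ih.1, ih.2]

theorem finite_range_nbWalk_of_eq {n m : ℕ} (hnm : n < m)
    (h₀ : H.nbWalk v₀ v₁ n = H.nbWalk v₀ v₁ m)
    (h₁ : H.nbWalk v₀ v₁ (n + 1) = H.nbWalk v₀ v₁ (m + 1)) :
    (range (H.nbWalk v₀ v₁)).Finite := by
  refine ((finite_Iio m).image (H.nbWalk v₀ v₁)).subset ?_
  rintro _ ⟨j, rfl⟩
  induction j using Nat.strong_induction_on with
  | _ j ih =>
    by_cases hj : j < m
    · exact ⟨j, hj, rfl⟩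
    · obtain ⟨k, rfl⟩ := Nat.exists_eq_add_of_le (not_lt.1 hj)
      rw [← nbWalk_add_eq_of_eq h₀ h₁ k]
      exact ih _ (by omega)

/-- A walk through a finite set infinitely often repeats a step, after which it is periodic. -/
theorem finite_range_nbWalk_of_infinite_visits (hH : ∀ v ∈ H.verts, DegEq2 H v)
    (h : H.Adj v₀ v₁) {F : Set V} (hF : F.Finite) (hvis : {n | H.nbWalk v₀ v₁ n ∈ F}.Infinite) :
    (range (H.nbWalk v₀ v₁)).Finite := by
  obtain ⟨n, -, m, -, hne, heq⟩ := hvis.exists_ne_map_eq_of_mapsTo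
    (f := fun n => (H.nbWalk v₀ v₁ n, H.nbWalk v₀ v₁ (n + 1)))
    (fun n hn => mk_mem_prod hn (mem_biUnion (t := H.neighborSet) hn (adj_nbWalk hH h n)))
    (hF.prod (hF.biUnion fun f _ => finite_neighborSet hH f))
  obtain ⟨h₀, h₁⟩ := Prod.ext_iff.1 heq
  rcases hne.lt_or_gt with hlt | hlt
  · exact finite_range_nbWalk_of_eq hlt h₀ h₁
  · exact finite_range_nbWalk_of_eq hlt h₀.symm h₁.symm

theorem mem_range_nbWalk_or_mem_neighborSet (hH : ∀ v ∈ H.verts, DegEq2 H v)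
    (h : H.Adj v₀ v₁) {n : ℕ} {x : V} (hx : H.Adj (H.nbWalk v₀ v₁ n) x) :
    x ∈ range (H.nbWalk v₀ v₁) ∨ x ∈ H.neighborSet v₀ := by
  cases n with
  | zero => exact Or.inr hx
  | succ n =>
    have hx' : x ∈ H.neighborSet _ := hx
    rw [neighborSet_nbWalk_succ hH h] at hx'
    rcases hx' with rfl | rfl
    exacts [Or.inl ⟨n, rfl⟩, Or.inl ⟨n + 2, rfl⟩]

theorem mem_range_nbWalk_of_reachable (hH : ∀ v ∈ H.verts, DegEq2 H v) {v₀ : H.verts} {a b : V}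
    (hN : H.neighborSet v₀ = {a, b}) {v : H.verts} (hv : H.coe.Reachable v₀ v) :
    (v : V) ∈ range (H.nbWalk v₀ a) ∪ range (H.nbWalk v₀ b) := by
  have hnbr : H.neighborSet v₀ ⊆ range (H.nbWalk v₀ a) ∪ range (H.nbWalk v₀ b) := by
    rw [hN]
    rintro _ (rfl | rfl)
    exacts [Or.inl ⟨1, rfl⟩, Or.inr ⟨1, rfl⟩]
  have ha : H.Adj v₀ a := show a ∈ H.neighborSet v₀ from hN ▸ Or.inl rfl
  have hb : H.Adj v₀ b := show b ∈ H.neighborSet v₀ from hN ▸ Or.inr rfl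
  refine hv.mem_of_adj_mem (s := Subtype.val ⁻¹' (range (H.nbWalk v₀ a) ∪ range (H.nbWalk v₀ b)))
    (fun x y hx hxy => ?_) (Or.inl ⟨0, rfl⟩)
  rcases hx with ⟨n, hn⟩ | ⟨n, hn⟩
  · rcases mem_range_nbWalk_or_mem_neighborSet hH ha (n := n) (by rw [hn]; exact hxy) with h | h
    exacts [Or.inl h, hnbr h]
  · rcases mem_range_nbWalk_or_mem_neighborSet hH hb (n := n) (by rw [hn]; exact hxy) with h | h
    exacts [Or.inr h, hnbr h]

theorem exists_nbWalk_cover (hH : ∀ v ∈ H.verts, DegEq2 H v) :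
    ∃ e : H.coe.ConnectedComponent × Bool → V × V, (∀ p, H.Adj (e p).1 (e p).2) ∧
      H.verts ⊆ ⋃ p, range (H.nbWalk (e p).1 (e p).2) := by
  have : ∀ κ : H.coe.ConnectedComponent, ∃ v₀ : H.verts, ∃ a b : V,
      H.coe.connectedComponentMk v₀ = κ ∧ H.neighborSet v₀ = {a, b} := by
    intro κ
    obtain ⟨v₀, rfl⟩ := κ.exists_rep
    obtain ⟨a, b, -, hN⟩ := hH v₀ v₀.2
    exact ⟨v₀, a, b, rfl, hN⟩
  choose v₀ a b hv₀ hN using this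
  refine ⟨fun p => (v₀ p.1, cond p.2 (a p.1) (b p.1)), fun ⟨κ, β⟩ => ?_, fun v hv => ?_⟩
  · show cond β (a κ) (b κ) ∈ H.neighborSet (v₀ κ)
    cases β <;> simp [hN]
  · set κ := H.coe.connectedComponentMk ⟨v, hv⟩
    rcases mem_range_nbWalk_of_reachable hH (hN κ) (SimpleGraph.ConnectedComponent.exact (hv₀ κ))
      with h | h
    exacts [mem_iUnion.2 ⟨(κ, true), h⟩, mem_iUnion.2 ⟨(κ, false), h⟩]

end SimpleGraph.Subgraph

def bipartiteOfRel {α β : Type*} (r : α → β → Prop) : SimpleGraph (α ⊕ β) where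
  Adj
    | .inl a, .inr b => r a b
    | .inr b, .inl a => r a b
    | _, _ => False
  symm := ⟨by rintro (a | b) (a' | b') h <;> exact h⟩
  loopless := ⟨by rintro (a | b) h <;> exact h⟩

theorem bipartiteWith_bipartiteOfRel {α β : Type*} (r : α → β → Prop) :
    BipartiteWith (bipartiteOfRel r) (range Sum.inl) (range Sum.inr) := by
  refine ⟨fun v => ?_, isCompl_range_inl_range_inr.disjoint, ?_⟩
  · rcases v with a | b
    exacts [Or.inl ⟨a, rfl⟩, Or.inr ⟨b, rfl⟩]
  · rintro (a | b) (a' | b') h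
    exacts [h.elim, Or.inl ⟨⟨a, rfl⟩, ⟨b', rfl⟩⟩, Or.inr ⟨⟨b, rfl⟩, ⟨a', rfl⟩⟩, h.elim]

theorem List.le_length_of_take_eq_take {α : Type*} {x y : List α} {k : ℕ}
    (h : x.take k = y.take k) (hne : x ≠ y) : k ≤ x.length := by
  by_contra! hlt
  have hx : x = y.take k := (List.take_of_length_le hlt.le).symm.trans h
  have hyx : y.length = x.length := by
    have := congrArg List.length hx
    simp only [List.length_take] at this
    omega
  exact hne (hx.trans (List.take_of_length_le (by omega)))

namespace HubTree

/-- The hubs of the node `t`: enough to inject any set of words whose pairwise common prefixes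
are no longer than `t`, by truncation to length `t.length + 1`. -/
abbrev Hub : Type := Σ t : List Bool, {u : List Bool // u.length ≤ t.length + 1}

abbrev V : Type := List Bool ⊕ Hub

def G : SimpleGraph V := bipartiteOfRel fun s (h : Hub) => h.1 <+: s

def pos : V → List Bool := Sum.elim id Sigma.fst

instance (n : ℕ) : Finite {u : List Bool // u.length ≤ n} :=
  (List.finite_length_le Bool n).to_subtype

theorem finite_preimage_pos {T : Set (List Bool)} (hT : T.Finite) : (pos ⁻¹' T).Finite := by
  refine hT.preimage' fun t _ => ?_
  refine ((finite_singleton (Sum.inl t)).union (finite_range fun u => Sum.inr ⟨t, u⟩)).subset ?_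
  rintro (s | ⟨t', u⟩) (rfl : _ = t)
  exacts [Or.inl rfl, Or.inr ⟨u, rfl⟩]

theorem finite_neighborSet_inl (s : List Bool) : (G.neighborSet (Sum.inl s)).Finite := by
  refine (finite_preimage_pos (List.finite_length_le Bool s.length)).subset ?_
  rintro (s' | ⟨t, u⟩) h
  exacts [h.elim, (h : t <+: s).length_le]

theorem prefix_pos_of_adj {v w : V} {t : List Bool} (hvw : G.Adj v w) (ht : t <+: pos v)
    (hlen : t.length ≤ (pos w).length) : t <+: pos w := by
  rcases v with s | ⟨t', u⟩ <;> rcases w with s' | ⟨t'', u'⟩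
  · exact hvw.elim
  · exact List.prefix_of_prefix_length_le ht hvw hlen
  · exact ht.trans hvw
  · exact hvw.elim

theorem hub_mem_N2 {X : Set V} {x y : List Bool} (hx : Sum.inl x ∈ X) (hy : Sum.inl y ∈ X)
    (hxy : x ≠ y) {h : Hub} (hhx : h.1 <+: x) (hhy : h.1 <+: y) : Sum.inr h ∈ N2 G X :=
  ⟨_, hx, _, hy, by simpa using hxy, hhx, hhy⟩

theorem mk_le_mk_N2_of_finite {Y : Set (List Bool)} (hY : Y.Finite) {x₀ y₀ : List Bool}
    (hx₀ : x₀ ∈ Y) (hy₀ : y₀ ∈ Y) (hne : x₀ ≠ y₀) :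
    Cardinal.mk Y ≤ Cardinal.mk (N2 G (Sum.inl '' Y)) := by
  classical
  have hex : ∃ d, InjOn (List.take d) Y := by
    obtain ⟨d, hd⟩ := (hY.image List.length).bddAbove
    refine ⟨d, fun x hx y hy hxy => ?_⟩
    rwa [List.take_of_length_le (hd ⟨x, hx, rfl⟩), List.take_of_length_le (hd ⟨y, hy, rfl⟩)]
      at hxy
  set d := Nat.find hex
  have hd : d ≠ 0 := fun h => hne (Nat.find_spec hex hx₀ hy₀ (by simp [d, h]))
  -- `d` is the least length at which truncation separates `Y`, so truncation to length `d`
  -- injects `Y` into the hubs of a common prefix of length `d - 1` of two words of `Y`.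
  obtain ⟨x, hx, y, hy, hxy, hne'⟩ : ∃ x ∈ Y, ∃ y ∈ Y, x.take (d - 1) = y.take (d - 1) ∧ x ≠ y := by
    simpa [InjOn] using Nat.find_min hex (show d - 1 < d by omega)
  set t := x.take (d - 1)
  have ht : t.length + 1 = d := by
    simp only [t, List.length_take, List.le_length_of_take_eq_take hxy hne', min_eq_left]
    omega
  let g : List Bool → V := fun l => Sum.inr ⟨t, l.take d, by simp [ht]⟩
  calc Cardinal.mk Y = Cardinal.mk (g '' Y) := by
        refine (Cardinal.mk_image_eq_of_injOn _ _ fun l hl l' hl' h => Nat.find_spec hex hl hl' ?_).symm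
        simpa [g] using h
    _ ≤ _ := by
      refine Cardinal.mk_le_mk_of_subset ?_
      rintro _ ⟨l, -, rfl⟩
      exact hub_mem_N2 (mem_image_of_mem _ hx) (mem_image_of_mem _ hy) hne' (List.take_prefix _ _)
        (show t <+: y from hxy ▸ List.take_prefix _ _)

theorem infinite_N2_of_infinite {Y : Set (List Bool)} (hY : Y.Infinite) :
    (N2 G (Sum.inl '' Y)).Infinite := by
  have hsplit : ∀ n, ∃ t : List Bool, t.length = n ∧
      ∃ x ∈ Y, ∃ y ∈ Y, x ≠ y ∧ t <+: x ∧ t <+: y := by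
    intro n
    have hlong : {x ∈ Y | n ≤ x.length}.Infinite :=
      (hY.sdiff (List.finite_length_lt Bool n)).mono fun x hx => ⟨hx.1, not_lt.1 hx.2⟩
    obtain ⟨x, hx, y, hy, hxy, htake⟩ := hlong.exists_ne_map_eq_of_mapsTo (f := List.take n)
      (fun x hx => List.length_take_of_le hx.2) (List.finite_length_eq Bool n)
    exact ⟨x.take n, List.length_take_of_le hx.2, x, hx.1, y, hy.1, hxy, List.take_prefix _ _,
      htake ▸ List.take_prefix _ _⟩
  choose t ht x hx y hy hxy htx hty using hsplit
  refine infinite_of_injective_forall_mem (f := fun n => (Sum.inr ⟨t n, [], by simp⟩ : V))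
    (fun n m h => ?_) fun n =>
      hub_mem_N2 (mem_image_of_mem _ (hx n)) (mem_image_of_mem _ (hy n)) (hxy n) (htx n) (hty n)
  simpa [pos, ht] using congrArg (fun v => (pos v).length) h

theorem dhp : DHP G (range Sum.inl) := by
  refine ⟨?_, fun X hX hX2 => ?_⟩
  · have := (infinite_range_of_injective (Sum.inl_injective (α := List Bool) (β := Hub))).to_subtype
    exact (Cardinal.natCast_lt_aleph0 (n := 2)).le.trans (Cardinal.aleph0_le_mk _)
  obtain ⟨Y, rfl⟩ : ∃ Y, Sum.inl '' Y = X := ⟨Sum.inl ⁻¹' X, image_preimage_eq_of_subset hX⟩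
  rw [Cardinal.mk_image_eq Sum.inl_injective] at hX2 ⊢
  rcases Y.finite_or_infinite with hY | hY
  · obtain ⟨⟨x, hx⟩, ⟨y, hy⟩, hxy⟩ := Cardinal.two_le_iff.1 hX2
    exact mk_le_mk_N2_of_finite hY hx hy fun h => hxy (Subtype.ext h)
  · have := (infinite_N2_of_infinite hY).to_subtype
    exact Cardinal.mk_le_aleph0.trans (Cardinal.aleph0_le_mk _)

/-- A walk that eventually stays below depth `t₁.length` cannot leave the subtree it is in. -/
theorem eq_of_infinite_setOf_prefix_pos {w : ℕ → V} (hw : ∀ n, G.Adj (w n) (w (n + 1)))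
    {t₁ t₂ : List Bool} (hlen : t₁.length = t₂.length)
    (hlow : {n | (pos (w n)).length < t₁.length}.Finite)
    (h₁ : {n | t₁ <+: pos (w n)}.Infinite) (h₂ : {n | t₂ <+: pos (w n)}.Infinite) : t₁ = t₂ := by
  obtain ⟨N, hN⟩ := hlow.bddAbove
  obtain ⟨n₁, hn₁, hNn₁⟩ := h₁.exists_gt N
  have hstay : ∀ k, n₁ ≤ k → t₁ <+: pos (w k) := by
    intro k hk
    induction k, hk using Nat.le_induction with
    | base => exact hn₁
    | succ k hk ih =>
      exact prefix_pos_of_adj (hw k) ih (not_lt.1 fun h => by have := hN h; omega)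
  obtain ⟨n₂, hn₂, hn₁₂⟩ := h₂.exists_gt n₁
  exact (List.prefix_of_prefix_length_le (hstay n₂ hn₁₂.le) hn₂ hlen.le).eq_of_length hlen

theorem eq_of_infinite_range_nbWalk_inter {H : G.Subgraph} (hH : ∀ v ∈ H.verts, DegEq2 H v)
    {v₀ v₁ : V} (h : H.Adj v₀ v₁) {t₁ t₂ : List Bool} (hlen : t₁.length = t₂.length)
    (h₁ : (range (H.nbWalk v₀ v₁) ∩ {v | t₁ <+: pos v}).Infinite)
    (h₂ : (range (H.nbWalk v₀ v₁) ∩ {v | t₂ <+: pos v}).Infinite) : t₁ = t₂ := by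
  have hindex : ∀ {t : List Bool}, (range (H.nbWalk v₀ v₁) ∩ {v | t <+: pos v}).Infinite →
      {n | t <+: pos (H.nbWalk v₀ v₁ n)}.Infinite := fun ht => by
    rw [← image_preimage_eq_range_inter] at ht
    exact ht.of_image _
  refine eq_of_infinite_setOf_prefix_pos (fun n => (H.adj_nbWalk hH h n).adj_sub) hlen ?_
    (hindex h₁) (hindex h₂)
  by_contra hlow
  exact h₁ ((H.finite_range_nbWalk_of_infinite_visits hH h
    (finite_preimage_pos (List.finite_length_lt Bool t₁.length)) hlow).subset inter_subset_left)

theorem infinite_setOf_prefix (t : List Bool) : {s : List Bool | t <+: s}.Infinite :=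
  infinite_of_injective_forall_mem (f := fun n => t ++ List.replicate n true)
    (fun n m h => by simpa using congrArg List.length h) fun n => List.prefix_append _ _

theorem infinite_connectedComponent (H : G.Subgraph) (hS : range Sum.inl ⊆ H.verts)
    (hH : ∀ v ∈ H.verts, DegEq2 H v) : Infinite H.coe.ConnectedComponent := by
  by_contra hfin
  rw [not_infinite_iff_finite] at hfin
  obtain ⟨e, he, hcover⟩ := H.exists_nbWalk_cover hH
  have hmeet : ∀ t : List Bool,
      ∃ p, (range (H.nbWalk (e p).1 (e p).2) ∩ {v | t <+: pos v}).Infinite := by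
    intro t
    by_contra! hall
    refine (infinite_setOf_prefix t).image Sum.inl_injective.injOn
      ((finite_iUnion hall).subset ?_)
    rintro _ ⟨s, hs, rfl⟩
    obtain ⟨p, hp⟩ := mem_iUnion.1 (hcover (hS ⟨s, rfl⟩))
    exact mem_iUnion.2 ⟨p, hp, hs⟩
  choose g hg using hmeet
  set c := Nat.card H.coe.ConnectedComponent
  have hinj : Injective fun f : Fin (c + 1) → Bool => g (List.ofFn f) := fun f f' hff' =>
    List.ofFn_injective <| eq_of_infinite_range_nbWalk_inter hH (he _) (by simp) (hg _)
      (by rw [show g (List.ofFn f) = g (List.ofFn f') from hff']; exact hg _)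
  have hcard := Nat.card_le_card_of_injective _ hinj
  simp only [Nat.card_eq_fintype_card, Fintype.card_fun, Fintype.card_bool, Fintype.card_fin,
    Nat.card_prod] at hcard
  have := @Nat.lt_two_pow_self c
  rw [pow_succ] at hcard
  omega

end HubTree

theorem stmt3 : ∃ (V : Type) (G : SimpleGraph V) (S R : Set V),
    Countable V ∧ Infinite V ∧ BipartiteWith G S R ∧ DHP G S ∧
    (∀ v ∈ S, (G.neighborSet v).Finite) ∧
    ∀ H : G.Subgraph, S ⊆ H.verts → (∀ v ∈ H.verts, DegEq2 H v) →
      Infinite H.coe.ConnectedComponent :=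
  ⟨HubTree.V, HubTree.G, range Sum.inl, range Sum.inr, inferInstance, inferInstance,
    bipartiteWith_bipartiteOfRel _, HubTree.dhp,
    fun _ ⟨s, hs⟩ => hs ▸ HubTree.finite_neighborSet_inl s, HubTree.infinite_connectedComponent⟩
end

section
/- Let G(A,B) be a bipartite graph satisfying the double Hall property with both sides A and B infinite, where every vertex of A has only finitely many neighbors. Suppose that for each vertex v ∈ B either the neighborhood N(v) is finite or N(v) = A \ F_v for some finite set F_v ⊆ A. Then the set B' = {v ∈ B : N(v) = A \ F_v for some finite F_v ⊆ A} is infinite. -/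
open Set

section

variable {V : Type*} (G : SimpleGraph V)

lemma exists_mem_N2_insert_subset {A X : Set V} (hA : A.Infinite) (hX : X.Finite)
    (hXlf : ∀ x ∈ X, (G.neighborSet x).Finite) :
    ∃ a ∈ A, a ∉ X ∧ N2 G (insert a X) ⊆ N2 G X ∪ {v | (G.neighborSet v).Infinite} := by
  set T := ⋃ x ∈ X, ⋃ v ∈ {v ∈ G.neighborSet x | (G.neighborSet v).Finite}, G.neighborSet v
  have hT : T.Finite :=
    hX.biUnion fun x hx => ((hXlf x hx).subset (sep_subset _ _)).biUnion fun _ hv => hv.2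
  obtain ⟨a, haA, haXT⟩ := (hA.sdiff (hX.union hT)).nonempty
  refine ⟨a, haA, fun haX => haXT (Or.inl haX), fun v hv => ?_⟩
  rcases N2_insert_subset G a X hv with hv | ⟨hva, x, hx, hvx⟩
  · exact Or.inl hv
  · exact Or.inr fun hvfin => haXT (Or.inr (mem_biUnion hx (mem_biUnion ⟨hvx.symm, hvfin⟩ hva)))

lemma exists_finset_card_eq_N2_subset {A : Set V} (hA : A.Infinite)
    (hlf : ∀ v ∈ A, (G.neighborSet v).Finite) (n : ℕ) :
    ∃ X : Finset V, ↑X ⊆ A ∧ X.card = n ∧ N2 G X ⊆ {v | (G.neighborSet v).Infinite} := by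
  classical
  induction n with
  | zero => exact ⟨∅, by simp, rfl, fun v ⟨x, hx, _⟩ => by simp at hx⟩
  | succ n ih =>
    obtain ⟨X, hXA, hcard, hN2⟩ := ih
    obtain ⟨a, haA, haX, hsub⟩ :=
      exists_mem_N2_insert_subset G hA X.finite_toSet fun x hx => hlf x (hXA hx)
    refine ⟨insert a X, ?_, by rw [Finset.card_insert_of_notMem haX, hcard], ?_⟩
    · rw [Finset.coe_insert]
      exact insert_subset haA hXA
    · rw [Finset.coe_insert]
      exact hsub.trans (union_subset hN2 subset_rfl)

lemma DHP.infinite_setOf_neighborSet_infinite {A : Set V} (hdhp : DHP G A) (hA : A.Infinite)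
    (hlf : ∀ v ∈ A, (G.neighborSet v).Finite) :
    {v | (G.neighborSet v).Infinite}.Infinite := by
  rw [← infinite_coe_iff, Cardinal.infinite_iff, Cardinal.aleph0_le]
  intro n
  obtain ⟨X, hXA, hcard, hN2⟩ := exists_finset_card_eq_N2_subset G hA hlf (n + 2)
  have hXcard : Cardinal.mk (X : Set V) = (n + 2 : ℕ) := by simp [hcard]
  calc (n : Cardinal) ≤ (n + 2 : ℕ) := by exact_mod_cast Nat.le_add_right n 2
    _ = Cardinal.mk (X : Set V) := hXcard.symm
    _ ≤ Cardinal.mk (N2 G X) :=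
      hdhp.2 X hXA (by rw [hXcard]; exact_mod_cast Nat.le_add_left 2 n)
    _ ≤ _ := Cardinal.mk_le_mk_of_subset hN2

end

theorem stmt6_general {V : Type*} (G : SimpleGraph V) (A B : Set V)
    (hbip : BipartiteWith G A B) (hdhp : DHP G A)
    (hA : A.Infinite)
    (hlf : ∀ v ∈ A, (G.neighborSet v).Finite)
    (hdeg : ∀ v ∈ B, (G.neighborSet v).Finite ∨
      ∃ F : Set V, F ⊆ A ∧ F.Finite ∧ G.neighborSet v = A \ F) :
    {v ∈ B | ∃ F : Set V, F ⊆ A ∧ F.Finite ∧ G.neighborSet v = A \ F}.Infinite := by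
  refine (hdhp.infinite_setOf_neighborSet_infinite G hA hlf).mono fun v hv => ?_
  have hvB : v ∈ B := (hbip.1 v).resolve_left fun hvA => hv (hlf v hvA)
  exact ⟨hvB, (hdeg v hvB).resolve_left hv⟩

theorem stmt6 {V : Type*} (G : SimpleGraph V) (A B : Set V)
    (hbip : BipartiteWith G A B) (hdhp : DHP G A)
    (hA : A.Infinite) (hB : B.Infinite)
    (hlf : ∀ v ∈ A, (G.neighborSet v).Finite)
    (hdeg : ∀ v ∈ B, (G.neighborSet v).Finite ∨
      ∃ F : Set V, F ⊆ A ∧ F.Finite ∧ G.neighborSet v = A \ F) :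
    {v ∈ B | ∃ F : Set V, F ⊆ A ∧ F.Finite ∧ G.neighborSet v = A \ F}.Infinite :=
  stmt6_general G A B hbip hdhp hA hlf hdeg
end

section
/- Suppose that every bipartite graph G(A,B) satisfying the double Hall property with both sides A and B infinite, in which every vertex of A has only finitely many neighbors and for each v ∈ B either N(v) is finite or N(v) = A \ F_v for some finite F_v ⊆ A, admits a family of pairwise vertex-disjoint double rays whose union contains every vertex of A. Then every finite bipartite graph M(X,Y) satisfying the double Hall property contains a path covering all vertices of X. -/
/-!
Glue countably many copies `copy · i` of `M` with hubs `hub j`, where `hub j` is joined to the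
`X`-vertices of the copies `i ≥ j - 1`. This graph keeps the double Hall property: a finite `Z`
with nonempty layers `Z_i` (`i ∈ I`) has `|Z_i| - 1` witnesses inside each copy, and `hub 0`
together with the hubs `hub (i + 1)` below the top layer supply `|I|` more; an infinite `Z` is
seen twice by every hub. Copy vertices have finite and hubs cofinite neighbourhoods, so the
hypothesis covers the `X`-vertices by disjoint double rays. A ray meets the finite copy `i` in
finite segments, and a segment through the whole `i`-th copy of `X` is a path of `M` covering
`X`. Otherwise every copy is entered at least twice, always from a hub; but only `hub 0`, `hub 1`,
`hub 2` touch the copies `0` and `1`, and a hub enters at most one copy.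
-/

open Set Function

theorem SimpleGraph.exists_isPath_of_adj_succ {V : Type*} {G : SimpleGraph V} (f : ℤ → V)
    {a b : ℤ} (hab : a ≤ b) (hadj : ∀ n, a ≤ n → n < b → G.Adj (f n) (f (n + 1)))
    (hinj : InjOn f (Icc a b)) :
    ∃ p : G.Walk (f a) (f b), p.IsPath ∧ ∀ v, v ∈ p.support ↔ v ∈ f '' Icc a b := by
  induction b, hab using Int.leInduction with
  | base => exact ⟨.nil, .nil, by simp⟩
  | succ b hab ih =>
    obtain ⟨p, hp, hsupp⟩ := ih (fun n h₁ h₂ => hadj n h₁ (by omega))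
      (hinj.mono (Icc_subset_Icc_right (by omega)))
    have hnew : f (b + 1) ∉ p.support := by
      rw [hsupp]
      rintro ⟨m, hm, hfm⟩
      have := hinj ⟨hm.1, hm.2.trans (by omega)⟩ ⟨by omega, le_rfl⟩ hfm
      exact absurd hm.2 (by omega)
    refine ⟨p.concat (hadj b hab (by omega)), hp.concat hnew _, fun v => ?_⟩
    rw [Walk.support_concat, List.mem_append, hsupp, List.mem_singleton]
    constructor
    · rintro (⟨m, hm, rfl⟩ | rfl)
      exacts [⟨m, ⟨hm.1, by grind⟩, rfl⟩, ⟨b + 1, ⟨by omega, le_rfl⟩, rfl⟩]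
    · rintro ⟨m, hm, rfl⟩
      rcases eq_or_lt_of_le hm.2 with rfl | hlt
      exacts [Or.inr rfl, Or.inl ⟨m, ⟨hm.1, by omega⟩, rfl⟩]

theorem Function.Injective.exists_Ioo_mapsTo {V : Type*} {g : ℤ → V} (hg : Injective g)
    {C : Set V} (hC : C.Finite) {n : ℤ} (hn : g n ∈ C) :
    ∃ a b, n ∈ Ioo a b ∧ g a ∉ C ∧ g b ∉ C ∧ MapsTo g (Ioo a b) C := by
  have hS : (g ⁻¹' C).Finite := hC.preimage hg.injOn
  obtain ⟨lo, hlo⟩ := hS.bddBelow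
  obtain ⟨hi, hhi⟩ := hS.bddAbove
  obtain ⟨a, ⟨han, haC⟩, hamax⟩ := Int.exists_greatest_of_bdd
    (P := fun z => z < n ∧ g z ∉ C) ⟨n, fun z hz => hz.1.le⟩
    ⟨min lo n - 1, by omega, fun h => by have := hlo h; omega⟩
  obtain ⟨b, ⟨hnb, hbC⟩, hbmin⟩ := Int.exists_least_of_bdd
    (P := fun z => n < z ∧ g z ∉ C) ⟨n, fun z hz => hz.1.le⟩
    ⟨max hi n + 1, by omega, fun h => by have := hhi h; omega⟩
  refine ⟨a, b, ⟨han, hnb⟩, haC, hbC, fun m hm => ?_⟩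
  by_contra hmC
  rcases lt_trichotomy m n with h | rfl | h
  · have := hamax m ⟨h, hmC⟩
    exact absurd hm.1 (by omega)
  · exact hmC hn
  · have := hbmin m ⟨h, hmC⟩
    exact absurd hm.2 (by omega)

theorem DHP.nonempty {V : Type*} {G : SimpleGraph V} {A : Set V} (h : DHP G A) : A.Nonempty := by
  obtain ⟨⟨x, hx⟩, -, -⟩ := Cardinal.two_le_iff.mp h.1
  exact ⟨x, hx⟩

theorem DHP.ncard_le_ncard_N2_add_one {V : Type*} [Finite V] {G : SimpleGraph V} {A : Set V}
    (h : DHP G A) {s : Set V} (hs : s ⊆ A) : s.ncard ≤ (N2 G s).ncard + 1 := by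
  rcases le_or_gt s.ncard 1 with hs1 | hs2
  · omega
  have hmk : (s.ncard : Cardinal) ≤ (N2 G s).ncard := by
    rw [cast_ncard s.toFinite, cast_ncard (toFinite _)]
    refine h.2 s hs ?_
    rw [← cast_ncard s.toFinite]
    exact_mod_cast hs2
  have := Nat.cast_le.mp hmk
  omega

section Rays

variable {V ι : Type*} {f : ι → ℤ → V}

theorem injective_uncurry_of_pairwise_disjoint (hf : ∀ κ, Injective (f κ))
    (hdisj : Pairwise fun κ κ' => Disjoint (range (f κ)) (range (f κ'))) :
    Injective (uncurry f) := by
  rintro ⟨κ, n⟩ ⟨κ', n'⟩ h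
  obtain rfl : κ = κ' := by
    by_contra hne
    exact disjoint_left.mp (hdisj hne) ⟨n, rfl⟩ ⟨n', h.symm⟩
  exact congrArg _ (hf κ h)

def IsEntry (f : ι → ℤ → V) (C : Set V) (p : ι × ℤ) : Prop :=
  f p.1 p.2 ∉ C ∧ f p.1 (p.2 + 1) ∈ C

theorem exists_ne_isEntry (hf : ∀ κ, Injective (f κ)) {C T : Set V} (hC : C.Finite)
    (hTC : T ⊆ C) (hT : T ⊆ ⋃ κ, range (f κ)) (hTne : T.Nonempty)
    (hsegment : ∀ κ a b, MapsTo (f κ) (Ioo a b) C → ¬ T ⊆ f κ '' Ioo a b) :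
    ∃ p q, p ≠ q ∧ IsEntry f C p ∧ IsEntry f C q := by
  obtain ⟨t, ht⟩ := hTne
  obtain ⟨κ, n, rfl⟩ := mem_iUnion.mp (hT ht)
  obtain ⟨a, b, hn, ha, hb, hab⟩ := (hf κ).exists_Ioo_mapsTo hC (hTC ht)
  obtain ⟨t', ht', ht'ab⟩ := not_subset.mp (hsegment κ a b hab)
  obtain ⟨κ', n', rfl⟩ := mem_iUnion.mp (hT ht')
  obtain ⟨a', b', hn', ha', hb', hab'⟩ := (hf κ').exists_Ioo_mapsTo hC (hTC ht')
  refine ⟨(κ, a), (κ', a'), ?_, ⟨ha, hab ⟨by omega, by grind⟩⟩,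
    ⟨ha', hab' ⟨by omega, by grind⟩⟩⟩
  -- the same entry would begin the same segment, which misses `f κ n'`
  rintro h
  obtain ⟨rfl, rfl⟩ := Prod.mk.inj h
  have hn'b : n' < b := by
    by_contra! hbn'
    exact hb (hab' ⟨by grind, by grind⟩)
  exact ht'ab ⟨n', ⟨hn'.1, hn'b⟩, rfl⟩

end Rays

inductive HubVertex (W : Type*)
  | copy (w : W) (i : ℕ)
  | hub (j : ℕ)

namespace HubVertex

variable {W : Type*}

def base (d : W) : HubVertex W → W
  | copy w _ => w
  | hub _ => d

variable (W) in
def layer (i : ℕ) : Set (HubVertex W) := range (copy · i)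

theorem layer_finite [Finite W] (i : ℕ) : (layer W i).Finite := finite_range _

theorem disjoint_layer {i i' : ℕ} (h : i ≠ i') : Disjoint (layer W i) (layer W i') := by
  rw [disjoint_left]
  rintro _ ⟨w, rfl⟩ ⟨w', hw'⟩
  exact h (copy.inj hw').2.symm

variable (M : SimpleGraph W) (X : Set W)

def hubAdj : HubVertex W → HubVertex W → Prop
  | copy v i, copy w i' => i = i' ∧ M.Adj v w
  | copy v i, hub j => v ∈ X ∧ j ≤ i + 1
  | hub j, copy v i => v ∈ X ∧ j ≤ i + 1
  | hub _, hub _ => False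

def hubGraph : SimpleGraph (HubVertex W) where
  Adj := hubAdj M X
  symm := by
    constructor
    rintro (⟨v, i⟩ | j) (⟨w, i'⟩ | j') h
    · exact ⟨h.1.symm, h.2.symm⟩
    all_goals exact h
  loopless := by
    constructor
    rintro (⟨v, i⟩ | j) h
    · exact M.loopless.irrefl v h.2
    · exact h

variable {M X}

@[simp] theorem hubGraph_adj_copy_copy {v w : W} {i i' : ℕ} :
    (hubGraph M X).Adj (copy v i) (copy w i') ↔ i = i' ∧ M.Adj v w := Iff.rfl

@[simp] theorem hubGraph_adj_hub_copy {v : W} {i j : ℕ} :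
    (hubGraph M X).Adj (hub j) (copy v i) ↔ v ∈ X ∧ j ≤ i + 1 := Iff.rfl

variable (X) in
def hubA : Set (HubVertex W) := {copy x i | (x ∈ X) (i : ℕ)}

def hubB (Y : Set W) : Set (HubVertex W) := {copy y i | (y ∈ Y) (i : ℕ)} ∪ range hub

theorem bipartiteWith_hubGraph {Y : Set W} (h : BipartiteWith M X Y) :
    BipartiteWith (hubGraph M X) (hubA X) (hubB Y) := by
  obtain ⟨hcover, hdisj, hadj⟩ := h
  refine ⟨?_, ?_, ?_⟩
  · rintro (⟨w, i⟩ | j)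
    · rcases hcover w with hw | hw
      exacts [Or.inl ⟨w, hw, i, rfl⟩, Or.inr (Or.inl ⟨w, hw, i, rfl⟩)]
    · exact Or.inr (Or.inr ⟨j, rfl⟩)
  · rw [disjoint_left]
    rintro _ ⟨x, hx, i, rfl⟩ (⟨y, hy, i', h⟩ | ⟨j, h⟩)
    · exact disjoint_left.mp hdisj hx ((copy.inj h).1 ▸ hy)
    · cases h
  · rintro (⟨v, i⟩ | j) (⟨w, i'⟩ | j') h
    · rcases hadj h.2 with ⟨hv, hw⟩ | ⟨hv, hw⟩
      exacts [Or.inl ⟨⟨v, hv, i, rfl⟩, Or.inl ⟨w, hw, i', rfl⟩⟩,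
        Or.inr ⟨Or.inl ⟨v, hv, i, rfl⟩, ⟨w, hw, i', rfl⟩⟩]
    · exact Or.inl ⟨⟨v, h.1, i, rfl⟩, Or.inr ⟨j', rfl⟩⟩
    · exact Or.inr ⟨Or.inr ⟨j, rfl⟩, ⟨w, h.1, i', rfl⟩⟩
    · exact h.elim

theorem hubA_infinite (hX : X.Nonempty) : (hubA X).Infinite := by
  obtain ⟨x, hx⟩ := hX
  exact infinite_of_injective_forall_mem (f := copy x) (fun i i' h => (copy.inj h).2)
    fun i => ⟨x, hx, i, rfl⟩

theorem hubB_infinite (Y : Set W) : (hubB Y).Infinite :=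
  infinite_of_injective_forall_mem (f := hub) (fun _ _ h => hub.inj h)
    fun j => Or.inr ⟨j, rfl⟩

theorem finite_neighborSet_copy [Finite W] (w : W) (i : ℕ) :
    ((hubGraph M X).neighborSet (copy w i)).Finite := by
  refine ((layer_finite i).union ((finite_Iic (i + 1)).image hub)).subset ?_
  rintro (⟨v, i'⟩ | j) h
  · exact Or.inl ⟨v, by rw [h.1]⟩
  · exact Or.inr ⟨j, h.2, rfl⟩

theorem exists_neighborSet_hub_eq_sdiff [Finite W] (j : ℕ) :
    ∃ F ⊆ hubA X, F.Finite ∧ (hubGraph M X).neighborSet (hub j) = hubA X \ F := by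
  refine ⟨{copy x i | (x ∈ X) (i : ℕ) (_ : i + 1 < j)}, ?_, ?_, ?_⟩
  · rintro _ ⟨x, hx, i, -, rfl⟩
    exact ⟨x, hx, i, rfl⟩
  · refine ((finite_univ.prod (finite_Iio j)).image fun p : W × ℕ => copy p.1 p.2).subset ?_
    rintro _ ⟨x, -, i, hi, rfl⟩
    exact ⟨(x, i), ⟨trivial, show i < j by omega⟩, rfl⟩
  · ext (⟨v, i⟩ | j')
    · simp only [SimpleGraph.mem_neighborSet, hubGraph_adj_hub_copy, hubA, mem_sdiff,
        mem_ofPred_eq, copy.injEq, not_exists, not_and]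
      grind
    · exact iff_of_false id (by simp [hubA])

theorem copy_mem_N2 {Z : Set (HubVertex W)} {v : W} {i : ℕ}
    (h : v ∈ N2 M ((copy · i) ⁻¹' Z)) :
    copy v i ∈ N2 (hubGraph M X) Z := by
  obtain ⟨x, hx, y, hy, hxy, hvx, hvy⟩ := h
  exact ⟨copy x i, hx, copy y i, hy, fun h => hxy (copy.inj h).1, ⟨rfl, hvx⟩, ⟨rfl, hvy⟩⟩

theorem ncard_biUnion_image_copy [Finite W] (I : Finset ℕ) (s : ℕ → Set W) :
    (⋃ i ∈ I, (copy · i) '' s i).ncard = ∑ i ∈ I, (s i).ncard := by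
  have hinj (i : ℕ) : Injective (copy (W := W) · i) := fun _ _ h => (copy.inj h).1
  rw [← Finset.set_biUnion_coe, Finite.ncard_biUnion I.finite_toSet (fun _ _ => toFinite _),
    finsum_mem_coe_finset]
  · exact Finset.sum_congr rfl fun i _ => ncard_image_of_injective _ (hinj i)
  · intro i _ i' _ hii'
    exact (disjoint_layer hii').mono (image_subset_range _ _) (image_subset_range _ _)

theorem mk_le_mk_N2_hubGraph_of_infinite [Finite W] {Z : Set (HubVertex W)}
    (hZA : Z ⊆ hubA X) (hZ : Z.Infinite) :
    Cardinal.mk Z ≤ Cardinal.mk (N2 (hubGraph M X) Z) := by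
  have hhub : range hub ⊆ N2 (hubGraph M X) Z := by
    rintro _ ⟨j, rfl⟩
    obtain ⟨F, -, hF, hnbrF⟩ := exists_neighborSet_hub_eq_sdiff (M := M) (X := X) j
    have hnbr : (Z ∩ (hubGraph M X).neighborSet (hub j)).Nontrivial := by
      rw [hnbrF, ← inter_sdiff_assoc, inter_eq_left.mpr hZA]
      exact (hZ.sdiff hF).nontrivial
    obtain ⟨x, ⟨hx, hjx⟩, y, ⟨hy, hjy⟩, hxy⟩ := hnbr
    exact ⟨x, hx, y, hy, hxy, hjx, hjy⟩
  have hZcount : Z.Countable :=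
    (countable_range fun p : W × ℕ => copy p.1 p.2).mono fun _ hz => by
      obtain ⟨x, -, i, rfl⟩ := hZA hz
      exact ⟨(x, i), rfl⟩
  have hN2 : (N2 (hubGraph M X) Z).Infinite :=
    (infinite_range_of_injective fun _ _ h => hub.inj h).mono hhub
  exact hZcount.le_aleph0.trans (Cardinal.infinite_iff.mp hN2.to_subtype)

theorem exists_finset_hubs_mem_N2 {Z : Set (HubVertex W)} (hZA : Z ⊆ hubA X) (hZ : Z.Finite)
    (hZ2 : 1 < Z.ncard) {I : Finset ℕ} (hI : ∀ i, i ∈ I ↔ ((copy · i) ⁻¹' Z).Nonempty) :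
    ∃ J : Finset ℕ, J.card = I.card ∧ ∀ j ∈ J, hub j ∈ N2 (hubGraph M X) Z := by
  obtain ⟨z, z', hz, hz', hzz'⟩ := (one_lt_ncard_iff hZ).mp hZ2
  have hIne : I.Nonempty := by
    obtain ⟨x, -, i, rfl⟩ := hZA hz
    exact ⟨i, (hI i).mpr ⟨x, hz⟩⟩
  have hadj {j : ℕ} {v : HubVertex W} (hv : v ∈ Z) (hj : ∀ i, v ∈ layer W i → j ≤ i + 1) :
      (hubGraph M X).Adj (hub j) v := by
    obtain ⟨x, hx, i, rfl⟩ := hZA hv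
    exact ⟨hx, hj i ⟨x, rfl⟩⟩
  -- hub 0 sees all of `Z`; for `i` below the top layer `t`, hub `i + 1` sees layers `i` and `t`
  set t := I.max' hIne
  refine ⟨I.image fun i => if i = t then 0 else i + 1, Finset.card_image_of_injOn ?_, ?_⟩
  · intro i _ i' _ h
    simp only at h
    split_ifs at h <;> omega
  · simp only [Finset.mem_image]
    rintro _ ⟨i, hi, rfl⟩
    split_ifs with hit
    · exact ⟨z, hz, z', hz', hzz', hadj hz (by simp), hadj hz' (by simp)⟩
    · obtain ⟨x, hx⟩ := (hI i).mp hi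
      obtain ⟨y, hy⟩ := (hI t).mp (I.max'_mem hIne)
      have hit' : i < t := lt_of_le_of_ne (I.le_max' i hi) hit
      refine ⟨copy x i, hx, copy y t, hy, fun h => hit (copy.inj h).2, hadj hx ?_, hadj hy ?_⟩
      · rintro _ ⟨_, h⟩
        rw [(copy.inj h).2]
      · rintro _ ⟨_, h⟩
        rw [(copy.inj h).2]
        omega

theorem mk_le_mk_N2_hubGraph_of_finite [Finite W] (hdhp : DHP M X) {Z : Set (HubVertex W)}
    (hZA : Z ⊆ hubA X) (hZ : Z.Finite) (hZ2 : 2 ≤ Z.ncard) :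
    Cardinal.mk Z ≤ Cardinal.mk (N2 (hubGraph M X) Z) := by
  obtain ⟨I, hI⟩ : ∃ I : Finset ℕ, ∀ i, i ∈ I ↔ ((copy · i) ⁻¹' Z).Nonempty := by
    have hP : ((fun p : W × ℕ => copy p.1 p.2) ⁻¹' Z).Finite :=
      hZ.preimage fun p _ q _ h => Prod.ext (copy.inj h).1 (copy.inj h).2
    exact ⟨(hP.image Prod.snd).toFinset, fun i => by simp [Set.Nonempty]⟩
  have hZeq : Z = ⋃ i ∈ I, (copy · i) '' ((copy · i) ⁻¹' Z) := by
    refine Subset.antisymm (fun z hz => ?_) (by simp)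
    obtain ⟨x, -, i, rfl⟩ := hZA hz
    exact mem_biUnion ((hI i).mpr ⟨x, hz⟩) ⟨x, hz, rfl⟩
  have hlayerX (i : ℕ) : (copy · i) ⁻¹' Z ⊆ X := fun x hx => by
    obtain ⟨x', hx', i', h⟩ := hZA hx
    exact (copy.inj h).1 ▸ hx'
  obtain ⟨J, hJI, hJ⟩ := exists_finset_hubs_mem_N2 hZA hZ (by omega) hI
  set S := (⋃ i ∈ I, (copy · i) '' N2 M ((copy · i) ⁻¹' Z)) ∪ hub '' J
  have hSN2 : S ⊆ N2 (hubGraph M X) Z := by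
    rintro _ (hv | ⟨j, hj, rfl⟩)
    · obtain ⟨i, -, v, hvN2, rfl⟩ := mem_iUnion₂.mp hv
      exact copy_mem_N2 hvN2
    · exact hJ j hj
  have hdisj : Disjoint (⋃ i ∈ I, (copy · i) '' N2 M ((copy · i) ⁻¹' Z)) (hub '' J) := by
    rw [disjoint_left]
    rintro _ hv ⟨j, -, rfl⟩
    obtain ⟨i, -, v, -, h⟩ := mem_iUnion₂.mp hv
    cases h
  have hcard : Z.ncard ≤ S.ncard := calc
    Z.ncard = ∑ i ∈ I, ((copy · i) ⁻¹' Z).ncard := by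
      nth_rewrite 1 [hZeq]
      exact ncard_biUnion_image_copy I _
    _ ≤ ∑ i ∈ I, ((N2 M ((copy · i) ⁻¹' Z)).ncard + 1) :=
      Finset.sum_le_sum fun i _ => hdhp.ncard_le_ncard_N2_add_one (hlayerX i)
    _ = S.ncard := by
      rw [ncard_union_eq hdisj (toFinite _) (J.finite_toSet.image _), ncard_biUnion_image_copy,
        ncard_image_of_injective _ fun _ _ h => hub.inj h, ncard_coe_finset, hJI,
        Finset.sum_add_distrib, Finset.card_eq_sum_ones]
  calc Cardinal.mk Z = Z.ncard := (cast_ncard hZ).symm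
    _ ≤ S.ncard := by exact_mod_cast hcard
    _ = Cardinal.mk S := cast_ncard (toFinite _)
    _ ≤ Cardinal.mk (N2 (hubGraph M X) Z) := Cardinal.mk_le_mk_of_subset hSN2

theorem dhp_hubGraph [Finite W] (h : DHP M X) : DHP (hubGraph M X) (hubA X) := by
  refine ⟨?_, fun Z hZA hZ2 => ?_⟩
  · exact Cardinal.ofNat_le_aleph0.trans
      (Cardinal.infinite_iff.mp (hubA_infinite h.nonempty).to_subtype)
  rcases Z.finite_or_infinite with hZ | hZ
  · refine mk_le_mk_N2_hubGraph_of_finite h hZA hZ ?_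
    rw [← cast_ncard hZ] at hZ2
    exact_mod_cast hZ2
  · exact mk_le_mk_N2_hubGraph_of_infinite hZA hZ

theorem exists_isPath_of_mapsTo_layer {g : ℤ → HubVertex W} (hg : Injective g)
    (hadj : ∀ n, (hubGraph M X).Adj (g n) (g (n + 1))) {i : ℕ} {a b : ℤ}
    (hmaps : MapsTo g (Ioo a b) (layer W i)) (hcov : (copy · i) '' X ⊆ g '' Ioo a b)
    (hX : X.Nonempty) : ∃ u v, ∃ p : M.Walk u v, p.IsPath ∧ ∀ x ∈ X, x ∈ p.support := by
  obtain ⟨x₀, hx₀⟩ := hX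
  obtain ⟨m₀, hm₀, -⟩ := hcov ⟨x₀, hx₀, rfl⟩
  set w : ℤ → W := fun n => (g n).base x₀
  have hgh : ∀ n ∈ Ioo a b, g n = copy (w n) i := by
    intro n hn
    obtain ⟨v, hv⟩ := hmaps hn
    simp only [w, ← hv, base]
  obtain ⟨p, hp, hsupp⟩ := SimpleGraph.exists_isPath_of_adj_succ (G := M) w
    (a := a + 1) (b := b - 1) (by grind)
    (fun n h₁ h₂ => by
      have := hadj n
      rwa [hgh n ⟨by omega, by omega⟩, hgh (n + 1) ⟨by omega, by omega⟩,
        hubGraph_adj_copy_copy, and_iff_right rfl] at this)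
    (fun m hm m' hm' hmm' => hg (by
      rw [hgh m ⟨by grind, by grind⟩, hgh m' ⟨by grind, by grind⟩, hmm']))
  refine ⟨_, _, p, hp, fun x hx => (hsupp x).mpr ?_⟩
  obtain ⟨m, hm, hgm⟩ := hcov ⟨x, hx, rfl⟩
  refine ⟨m, ⟨by grind, by grind⟩, ?_⟩
  have := hgh m hm
  rw [hgm] at this
  exact (copy.inj this).1.symm

theorem exists_hub_of_isEntry {ι : Type*} {f : ι → ℤ → HubVertex W}
    (hadj : ∀ κ n, (hubGraph M X).Adj (f κ n) (f κ (n + 1))) {i : ℕ} {p : ι × ℤ}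
    (hp : IsEntry f (layer W i) p) : ∃ j ≤ i + 1, uncurry f p = hub j := by
  obtain ⟨w, hw⟩ := hp.2
  have hpw := hadj p.1 p.2
  rw [← hw] at hpw
  have hout := hp.1
  change ∃ j ≤ i + 1, f p.1 p.2 = hub j
  generalize f p.1 p.2 = u at hpw hout
  cases u with
  | copy v i' => exact absurd ⟨v, by rw [hpw.1]⟩ hout
  | hub j => exact ⟨j, hpw.2, rfl⟩

theorem exists_isPath_of_rays_cover_hubA [Finite W] (hX : X.Nonempty) {ι : Type*}
    {f : ι → ℤ → HubVertex W} (hinj : ∀ κ, Injective (f κ))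
    (hadj : ∀ κ n, (hubGraph M X).Adj (f κ n) (f κ (n + 1)))
    (hdisj : Pairwise fun κ κ' => Disjoint (range (f κ)) (range (f κ')))
    (hcov : hubA X ⊆ ⋃ κ, range (f κ)) :
    ∃ u v, ∃ p : M.Walk u v, p.IsPath ∧ ∀ x ∈ X, x ∈ p.support := by
  by_contra hno
  have hentries (i : ℕ) : ∃ p q, p ≠ q ∧ IsEntry f (layer W i) p ∧ IsEntry f (layer W i) q :=
    exists_ne_isEntry hinj (layer_finite i) (image_subset_range _ _)
      ((show (copy · i) '' X ⊆ hubA X by rintro _ ⟨x, hx, rfl⟩; exact ⟨x, hx, i, rfl⟩).trans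
        hcov) (hX.image _)
      fun κ _ _ hmaps hT => hno (exists_isPath_of_mapsTo_layer (hinj κ) (hadj κ) hmaps hT hX)
  have hsame {i i' : ℕ} {p p' : ι × ℤ} {j : ℕ} (hp : IsEntry f (layer W i) p)
      (hp' : IsEntry f (layer W i') p') (hj : uncurry f p = hub j)
      (hj' : uncurry f p' = hub j) : i = i' ∧ p = p' := by
    obtain rfl := injective_uncurry_of_pairwise_disjoint hinj hdisj (hj.trans hj'.symm)
    refine ⟨?_, rfl⟩
    by_contra hii'
    exact disjoint_left.mp (disjoint_layer hii') hp.2 hp'.2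
  -- layers 0 and 1 need four distinct entry hubs, but only hubs 0, 1 and 2 are adjacent to them
  obtain ⟨p₁, p₂, h₁₂, hp₁, hp₂⟩ := hentries 0
  obtain ⟨p₃, p₄, h₃₄, hp₃, hp₄⟩ := hentries 1
  obtain ⟨j₁, hj₁, e₁⟩ := exists_hub_of_isEntry hadj hp₁
  obtain ⟨j₂, hj₂, e₂⟩ := exists_hub_of_isEntry hadj hp₂
  obtain ⟨j₃, hj₃, e₃⟩ := exists_hub_of_isEntry hadj hp₃
  obtain ⟨j₄, hj₄, e₄⟩ := exists_hub_of_isEntry hadj hp₄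
  have : j₁ ≠ j₂ := fun h => h₁₂ (hsame hp₁ hp₂ e₁ (h ▸ e₂)).2
  have : j₃ ≠ j₄ := fun h => h₃₄ (hsame hp₃ hp₄ e₃ (h ▸ e₄)).2
  have : j₁ ≠ j₃ := fun h => zero_ne_one (hsame hp₁ hp₃ e₁ (h ▸ e₃)).1
  have : j₁ ≠ j₄ := fun h => zero_ne_one (hsame hp₁ hp₄ e₁ (h ▸ e₄)).1
  have : j₂ ≠ j₃ := fun h => zero_ne_one (hsame hp₂ hp₃ e₂ (h ▸ e₃)).1
  have : j₂ ≠ j₄ := fun h => zero_ne_one (hsame hp₂ hp₄ e₂ (h ▸ e₄)).1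
  omega

end HubVertex

open HubVertex

theorem stmt10
    (hyp : ∀ (V : Type) (G : SimpleGraph V) (A B : Set V),
      BipartiteWith G A B → DHP G A → A.Infinite → B.Infinite →
      (∀ v ∈ A, (G.neighborSet v).Finite) →
      (∀ v ∈ B, (G.neighborSet v).Finite ∨
        ∃ F : Set V, F ⊆ A ∧ F.Finite ∧ G.neighborSet v = A \ F) →
      ∃ (ι : Type) (f : ι → ℤ → V),
        (∀ i, Function.Injective (f i)) ∧
        (∀ i n, G.Adj (f i n) (f i (n + 1))) ∧
        (Pairwise fun i j => Disjoint (Set.range (f i)) (Set.range (f j))) ∧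
        A ⊆ ⋃ i, Set.range (f i)) :
    ∀ (W : Type) (M : SimpleGraph W) (X Y : Set W), Finite W →
      BipartiteWith M X Y → DHP M X →
      ∃ (u v : W) (p : M.Walk u v), p.IsPath ∧ ∀ x ∈ X, x ∈ p.support := by
  intro W M X Y _ hbip hdhp
  obtain ⟨ι, f, hinj, hadj, hdisj, hcov⟩ := hyp (HubVertex W) (hubGraph M X) (hubA X) (hubB Y)
    (bipartiteWith_hubGraph hbip) (dhp_hubGraph hdhp) (hubA_infinite hdhp.nonempty)
    (hubB_infinite Y) (by rintro _ ⟨x, -, i, rfl⟩; exact finite_neighborSet_copy x i)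
    (by
      rintro _ (⟨y, -, i, rfl⟩ | ⟨j, rfl⟩)
      exacts [Or.inl (finite_neighborSet_copy y i), Or.inr (exists_neighborSet_hub_eq_sdiff j)])
  exact exists_isPath_of_rays_cover_hubA hdhp.nonempty hinj hadj hdisj hcov
end

section
/- Let G(A,B) be a bipartite graph satisfying the double Hall property with both sides A and B infinite, where every vertex of B has only finitely many neighbors. Then there exists a subgraph H of G whose vertex set contains all of A and in which every vertex has degree exactly 2 (equivalently, a collection of pairwise disjoint 2-regular subgraphs of G covering all vertices of A). -/
open Cardinal Function Set SimpleGraph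

universe u

theorem mk_biUnion_lt_of_finite {α ι : Type u} {c : Cardinal.{u}} (hc : ℵ₀ ≤ c) {s : Set ι}
    (hs : #s < c) {f : ι → Set α} (hf : ∀ i ∈ s, (f i).Finite) : #(⋃ i ∈ s, f i) < c := by
  rcases s.finite_or_infinite with hfin | hinf
  · exact (hfin.biUnion hf).lt_aleph0.trans_le hc
  · have : Infinite s := hinf.to_subtype
    calc #(⋃ i ∈ s, f i) ≤ #s * ⨆ i : s, #(f i) := mk_biUnion_le f s
      _ ≤ #s * ℵ₀ := by
        gcongr
        exact ciSup_le' fun i => (hf i i.2).lt_aleph0.le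
      _ = #s := mul_aleph0_eq (aleph0_le_mk s)
      _ < c := hs

section GreedyCover

variable {α ι : Type*} [LinearOrder ι] [WellFoundedLT ι] (P : Set α → Prop) (x : ι → α)

open Classical in
noncomputable def greedyCover : ι → Set α :=
  wellFounded_lt.fix fun i prev =>
    if h : ∃ S, P S ∧ x i ∈ S ∧ Disjoint S (⋃ (j) (hj : j < i), prev j hj) then h.choose else ∅

open Classical in
theorem greedyCover_eq (i : ι) : greedyCover P x i =
    if h : ∃ S, P S ∧ x i ∈ S ∧ Disjoint S (⋃ j < i, greedyCover P x j) then h.choose else ∅ := by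
  rw [greedyCover, WellFounded.fix_eq]

theorem greedyCover_eq_empty_or (i : ι) : greedyCover P x i = ∅ ∨
    P (greedyCover P x i) ∧ Disjoint (greedyCover P x i) (⋃ j < i, greedyCover P x j) := by
  rw [greedyCover_eq P x i]
  split_ifs with h
  · exact Or.inr ⟨h.choose_spec.1, h.choose_spec.2.2⟩
  · exact Or.inl rfl

theorem mem_greedyCover {i : ι}
    (h : ∃ S, P S ∧ x i ∈ S ∧ Disjoint S (⋃ j < i, greedyCover P x j)) :
    x i ∈ greedyCover P x i := by
  rw [greedyCover_eq, dif_pos h]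
  exact h.choose_spec.2.1

theorem pairwise_disjoint_greedyCover : Pairwise (Disjoint on (greedyCover P x)) := by
  refine (pairwise_disjoint_on _).mpr fun i j hij => ?_
  rcases greedyCover_eq_empty_or P x j with h | ⟨-, h⟩
  · simp [h]
  · exact (h.mono_right (subset_iUnion₂ (s := fun k (_ : k < j) => greedyCover P x k) i hij)).symm

end GreedyCover

theorem exists_pairwiseDisjoint_cover {α : Type u} {A : Set α} (hA : A.Infinite)
    {P : Set α → Prop} (hP : ∀ S, P S → S.Finite)
    (hext : ∀ U : Set α, #U < #A → ∀ a ∈ A, a ∉ U → ∃ S, P S ∧ a ∈ S ∧ Disjoint S U) :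
    ∃ 𝒮 : Set (Set α), (∀ S ∈ 𝒮, P S) ∧ 𝒮.PairwiseDisjoint id ∧ A ⊆ ⋃₀ 𝒮 := by
  obtain ⟨e⟩ : Nonempty ((#A).ord.ToType ≃ A) := Cardinal.eq.mp (mk_ord_toType _)
  set F := greedyCover P fun i => (e i : α)
  have hF : ∀ i, F i = ∅ ∨ P (F i) ∧ Disjoint (F i) (⋃ j < i, F j) :=
    greedyCover_eq_empty_or P _
  refine ⟨range F \ {∅}, ?_, ?_, ?_⟩
  · rintro _ ⟨⟨i, rfl⟩, hne⟩
    exact ((hF i).resolve_left hne).1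
  · rintro _ ⟨⟨i, rfl⟩, -⟩ _ ⟨⟨j, rfl⟩, -⟩ hij
    exact pairwise_disjoint_greedyCover P _ (ne_of_apply_ne F hij)
  · intro a ha
    obtain ⟨i, rfl⟩ : ∃ i, (e i : α) = a := ⟨e.symm ⟨a, ha⟩, by simp⟩
    have hcovered : (e i : α) ∈ ⋃ j, F j := by
      by_cases hprev : (e i : α) ∈ ⋃ j < i, F j
      · exact iUnion₂_subset_iUnion _ _ hprev
      · have hIio : #(Iio i) < #A := by simpa using mk_Iio_lt i (by simp)
        have hsmall : #(⋃ j < i, F j) < #A :=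
          mk_biUnion_lt_of_finite (aleph0_le_mk_iff.mpr hA.to_subtype) hIio fun j _ =>
            (hF j).elim (fun h => h ▸ finite_empty) fun h => hP _ h.1
        exact mem_iUnion_of_mem i (mem_greedyCover P _ (hext _ hsmall _ (e i).2 hprev))
    obtain ⟨j, hj⟩ := mem_iUnion.mp hcovered
    exact ⟨F j, ⟨⟨j, rfl⟩, (nonempty_of_mem hj).ne_empty⟩, hj⟩

theorem SimpleGraph.Subgraph.neighborSet_iSup_of_pairwise_disjoint {V ι : Type*}
    {G : SimpleGraph V} {f : ι → G.Subgraph} (hf : Pairwise (Disjoint on (fun i => (f i).verts)))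
    {i : ι} {v : V} (hv : v ∈ (f i).verts) : (⨆ i, f i).neighborSet v = (f i).neighborSet v := by
  rw [neighborSet_iSup]
  refine subset_antisymm (iUnion_subset fun j w hw => ?_)
    (subset_iUnion (fun j => (f j).neighborSet v) i)
  obtain rfl : j = i := by
    by_contra hji
    exact Set.disjoint_left.mp (hf hji) hw.fst_mem hv
  exact hw

section Bipartite

variable {V : Type*} {G : SimpleGraph V} {A B : Set V}

theorem BipartiteWith.symm (h : BipartiteWith G A B) : BipartiteWith G B A :=
  ⟨fun v => (h.1 v).symm, h.2.1.symm, fun _ _ hxy => (h.2.2 hxy).symm⟩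

theorem BipartiteWith.mem_right_of_adj (h : BipartiteWith G A B) {x y : V} (hx : x ∈ A)
    (hxy : G.Adj x y) : y ∈ B := by
  rcases h.2.2 hxy with ⟨-, hy⟩ | ⟨hxB, -⟩
  · exact hy
  · exact absurd hxB (disjoint_left.mp h.2.1 hx)

theorem BipartiteWith.not_adj (h : BipartiteWith G A B) {x y : V} (hx : x ∈ A) (hy : y ∈ A) :
    ¬G.Adj x y := fun hxy => disjoint_left.mp h.2.1 hy (h.mem_right_of_adj hx hxy)

theorem BipartiteWith.neighborSet_induce_union (h : BipartiteWith G A B) {P Q : Set V}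
    (hP : P ⊆ A) (hPQ : ∀ p ∈ P, ∀ q ∈ Q, G.Adj p q) {v : V} (hv : v ∈ P) :
    ((⊤ : G.Subgraph).induce (P ∪ Q)).neighborSet v = Q := by
  ext w
  simp only [Subgraph.mem_neighborSet, Subgraph.induce_adj, Subgraph.top_adj, mem_union]
  constructor
  · rintro ⟨-, hw | hw, hvw⟩
    · exact absurd hvw (h.not_adj (hP hv) (hP hw))
    · exact hw
  · exact fun hw => ⟨Or.inl hv, Or.inr hw, hPQ v hv w hw⟩

theorem BipartiteWith.degEq2_induce_completeBipartite (h : BipartiteWith G A B) {a a' b b' : V}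
    (ha : a ∈ A) (ha' : a' ∈ A) (haa' : a ≠ a') (hbb' : b ≠ b')
    (hadj : ∀ p ∈ ({a, a'} : Set V), ∀ q ∈ ({b, b'} : Set V), G.Adj p q) :
    ∀ v ∈ ({a, a'} ∪ {b, b'} : Set V),
      DegEq2 ((⊤ : G.Subgraph).induce ({a, a'} ∪ {b, b'})) v := by
  have hP : ({a, a'} : Set V) ⊆ A := insert_subset ha (singleton_subset_iff.mpr ha')
  have hQ : ({b, b'} : Set V) ⊆ B := fun q hq => h.mem_right_of_adj ha (hadj a (by simp) q hq)
  rintro v (hv | hv)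
  · exact ⟨b, b', hbb', h.neighborSet_induce_union hP hadj hv⟩
  · refine ⟨a, a', haa', ?_⟩
    rw [union_comm]
    exact h.symm.neighborSet_induce_union hQ (fun q hq p hp => (hadj p hp q hq).symm) hv

theorem adj_of_mem_N2_pair {a a' v : V} (hv : v ∈ N2 G {a, a'}) :
    ∀ p ∈ ({a, a'} : Set V), G.Adj p v := by
  obtain ⟨x, hx, y, hy, hxy, hvx, hvy⟩ := hv
  simp only [mem_insert_iff, mem_singleton_iff] at hx hy ⊢
  rintro p (rfl | rfl) <;> rcases hx with rfl | rfl <;> rcases hy with rfl | rfl <;>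
    first | exact absurd rfl hxy | exact hvx.symm | exact hvy.symm

theorem DHP.exists_two_common_neighbors (hdhp : DHP G A) {a a' : V} (ha : a ∈ A) (ha' : a' ∈ A)
    (hne : a ≠ a') :
    ∃ b b', b ≠ b' ∧ ∀ p ∈ ({a, a'} : Set V), ∀ q ∈ ({b, b'} : Set V), G.Adj p q := by
  have hpair : #({a, a'} : Set V) = 2 := by
    rw [mk_insert (by simpa using hne), mk_singleton]
    norm_num
  have hN2 : 2 ≤ #(N2 G {a, a'}) :=
    hpair ▸ hdhp.2 _ (insert_subset ha (singleton_subset_iff.mpr ha')) hpair.ge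
  obtain ⟨⟨b, hb⟩, ⟨b', hb'⟩, hbb'⟩ := two_le_iff.mp hN2
  refine ⟨b, b', fun h => hbb' (Subtype.ext h), fun p hp q hq => ?_⟩
  rcases hq with rfl | rfl
  · exact adj_of_mem_N2_pair hb p hp
  · exact adj_of_mem_N2_pair hb' p hp

theorem exists_fourCycle_avoiding (hbip : BipartiteWith G A B) (hdhp : DHP G A)
    (hA : A.Infinite) (hlf : ∀ v ∈ B, (G.neighborSet v).Finite) {U : Set V} (hU : #U < #A)
    {a : V} (ha : a ∈ A) (haU : a ∉ U) :
    ∃ S : Set V, (S.Finite ∧ ∀ v ∈ S, DegEq2 ((⊤ : G.Subgraph).induce S) v) ∧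
      a ∈ S ∧ Disjoint S U := by
  have hc : ℵ₀ ≤ #A := aleph0_le_mk_iff.mpr hA.to_subtype
  have hN : #(⋃ u ∈ U ∩ B, G.neighborSet u) < #A :=
    mk_biUnion_lt_of_finite hc ((mk_le_mk_of_subset inter_subset_left).trans_lt hU)
      fun u hu => hlf u hu.2
  have hW : #(insert a U ∪ ⋃ u ∈ U ∩ B, G.neighborSet u : Set V) < #A :=
    (mk_union_le _ _).trans_lt <| add_lt_of_lt hc
      (mk_insert_le.trans_lt (add_lt_of_lt hc hU (one_lt_aleph0.trans_le hc))) hN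
  obtain ⟨a', ha', ha'W⟩ := not_subset.mp fun hsub => (mk_le_mk_of_subset hsub).not_gt hW
  simp only [mem_union, mem_insert_iff, mem_iUnion, mem_inter_iff, SimpleGraph.mem_neighborSet,
    not_or, not_exists] at ha'W
  obtain ⟨⟨ha'a, ha'U⟩, ha'N⟩ := ha'W
  obtain ⟨b, b', hbb', hadj⟩ := hdhp.exists_two_common_neighbors ha ha' (Ne.symm ha'a)
  have hcommon : ∀ q ∈ ({b, b'} : Set V), q ∉ U := fun q hq hqU =>
    ha'N q ⟨hqU, hbip.mem_right_of_adj ha (hadj a (by simp) q hq)⟩ (hadj a' (by simp) q hq).symm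
  refine ⟨{a, a'} ∪ {b, b'},
    ⟨toFinite _, hbip.degEq2_induce_completeBipartite ha ha' (Ne.symm ha'a) hbb' hadj⟩,
    by simp, disjoint_left.mpr ?_⟩
  rintro v ((rfl | rfl) | hv)
  · exact haU
  · exact ha'U
  · exact hcommon v hv

end Bipartite

theorem stmt12_general {V : Type*} (G : SimpleGraph V) (A B : Set V)
    (hbip : BipartiteWith G A B) (hdhp : DHP G A)
    (hA : A.Infinite)
    (hlf : ∀ v ∈ B, (G.neighborSet v).Finite) :
    ∃ H : G.Subgraph, A ⊆ H.verts ∧ ∀ v ∈ H.verts, DegEq2 H v := by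
  obtain ⟨𝒮, hreg, hdisj, hcover⟩ := exists_pairwiseDisjoint_cover hA (fun S hS => hS.1)
    fun U hU a ha haU => exists_fourCycle_avoiding hbip hdhp hA hlf hU ha haU
  let f : 𝒮 → G.Subgraph := fun S => (⊤ : G.Subgraph).induce S
  have hverts : (⨆ S, f S).verts = ⋃₀ 𝒮 := by simp [f, sUnion_eq_iUnion]
  refine ⟨⨆ S, f S, hverts ▸ hcover, ?_⟩
  intro v hv
  obtain ⟨S, hS, hvS⟩ := hverts ▸ hv
  have hf : Pairwise (Disjoint on (fun S => (f S).verts)) := fun S T hST =>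
    hdisj S.2 T.2 (Subtype.coe_injective.ne hST)
  unfold DegEq2
  rw [Subgraph.neighborSet_iSup_of_pairwise_disjoint hf (i := ⟨S, hS⟩) hvS]
  exact (hreg S hS).2 v hvS

theorem stmt12 {V : Type*} (G : SimpleGraph V) (A B : Set V)
    (hbip : BipartiteWith G A B) (hdhp : DHP G A)
    (hA : A.Infinite) (hB : B.Infinite)
    (hlf : ∀ v ∈ B, (G.neighborSet v).Finite) :
    ∃ H : G.Subgraph, A ⊆ H.verts ∧ ∀ v ∈ H.verts, DegEq2 H v :=
  stmt12_general G A B hbip hdhp hA hlf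
end

section
/- Let G(A,B) be a bipartite graph satisfying the double Hall property with both sides A and B infinite. Suppose that for each vertex v ∈ B either the neighborhood N(v) is finite or N(v) = A \ F_v for some finite set F_v ⊆ A, and that the set B' = {v ∈ B : N(v) is cofinite in A} is finite. Then the set of vertices of A that are pseudo-isolated in G is finite. -/
/-- A vertex `v` is pseudo-isolated if some finite set `F` of other vertices can be
deleted so that no remaining vertex is at distance exactly 2 from `v` in `G \ F`. -/
def PseudoIsolated {V : Type*} (G : SimpleGraph V) (v : V) : Prop :=
  ∃ F : Set V, F.Finite ∧ v ∉ F ∧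
    ¬ ∃ w, w ∉ F ∧ w ≠ v ∧ ¬ G.Adj v w ∧ ∃ u, u ∉ F ∧ G.Adj v u ∧ G.Adj u w


/-!
If `v ∈ A` is pseudo-isolated, then for all but finitely many `w ∈ A` every common neighbour of
`v` and `w` lies in the finite set `B'`: a common neighbour `u ∉ B'` must lie in the finite set
`F` witnessing pseudo-isolation of `v` (otherwise `w` is at distance 2 from `v` in `G \ F`), and
`N(u)` is finite, so `w` ranges over the finite set `⋃ u ∈ F \ B', N(u)`. If infinitely many
vertices of `A` were pseudo-isolated, a greedy choice would give a set `X` of `|B'| + 2` of them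
pairwise sharing neighbours only in `B'`; then `N²(X) ⊆ B'`, contradicting `|N²(X)| ≥ |X|`.
-/

theorem Set.Infinite.exists_finset_card_eq_pairwise {α : Type*} {Q : Set α} (hQ : Q.Infinite)
    {r : α → α → Prop} (hr : ∀ ⦃v w⦄, r v w → r w v)
    (hfin : ∀ v ∈ Q, {w ∈ Q | ¬ r v w}.Finite) (n : ℕ) :
    ∃ S : Finset α, S.card = n ∧ ↑S ⊆ Q ∧ (S : Set α).Pairwise r := by
  classical
  induction n with
  | zero => exact ⟨∅, rfl, by simp, by simp⟩
  | succ n ih =>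
    obtain ⟨S, hcard, hSQ, hS⟩ := ih
    have hbad : (↑S ∪ ⋃ v ∈ S, {w ∈ Q | ¬ r v w}).Finite :=
      S.finite_toSet.union (S.finite_toSet.biUnion fun v hv => hfin v (hSQ hv))
    obtain ⟨x, hxQ, hx⟩ := (hQ.sdiff hbad).nonempty
    simp only [Set.mem_union, Finset.mem_coe, Set.mem_iUnion, Set.mem_ofPred_eq, not_or,
      not_exists, not_and, not_not] at hx
    obtain ⟨hxS, hxr⟩ := hx
    refine ⟨insert x S, by rw [Finset.card_insert_of_notMem hxS, hcard], ?_, ?_⟩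
    · rw [Finset.coe_insert]
      exact Set.insert_subset hxQ hSQ
    · rw [Finset.coe_insert, Set.pairwise_insert]
      exact ⟨hS, fun v hv _ => ⟨hr (hxr v hv hxQ), hxr v hv hxQ⟩⟩

section

variable {V : Type*} {G : SimpleGraph V} {A B : Set V}

theorem BipartiteWith.mem_right_of_adj_s15 (hbip : BipartiteWith G A B) {v u : V} (hv : v ∈ A)
    (hvu : G.Adj v u) : u ∈ B := by
  rcases hbip.2.2 hvu with ⟨-, hu⟩ | ⟨hvB, -⟩
  · exact hu
  · exact absurd hvB (Set.disjoint_left.mp hbip.2.1 hv)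

theorem BipartiteWith.not_adj_of_mem_left (hbip : BipartiteWith G A B) {v w : V} (hv : v ∈ A)
    (hw : w ∈ A) : ¬ G.Adj v w := fun hvw =>
  Set.disjoint_left.mp hbip.2.1 hw (hbip.mem_right_of_adj_s15 hv hvw)

theorem PseudoIsolated.finite_not_inter_neighborSet_subset (hbip : BipartiteWith G A B)
    {C : Set V} (hC : ∀ u ∈ B \ C, (G.neighborSet u).Finite) {v : V} (hvA : v ∈ A)
    (hv : PseudoIsolated G v) :
    {w ∈ A | ¬ G.neighborSet v ∩ G.neighborSet w ⊆ C}.Finite := by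
  obtain ⟨F, hF, -, hno⟩ := hv
  have hFC : (F ∩ (B \ C)).Finite := hF.inter_of_left _
  refine ((hF.union (hFC.biUnion fun u hu => hC u hu.2)).insert v).subset ?_
  rintro w ⟨hwA, hw⟩
  obtain ⟨u, ⟨hvu, hwu⟩, huC⟩ := Set.not_subset.mp hw
  rw [SimpleGraph.mem_neighborSet] at hvu hwu
  by_contra hwD
  simp only [Set.mem_insert_iff, Set.mem_union, Set.mem_iUnion, not_or, not_exists] at hwD
  obtain ⟨hwv, hwF, hwN⟩ := hwD
  have huF : u ∈ F := by
    by_contra huF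
    exact hno ⟨w, hwF, hwv, hbip.not_adj_of_mem_left hvA hwA, u, huF, hvu, hwu.symm⟩
  exact hwN u ⟨huF, hbip.mem_right_of_adj_s15 hvA hvu, huC⟩ hwu.symm

theorem N2_subset_of_pairwise {X C : Set V}
    (hX : X.Pairwise fun v w => G.neighborSet v ∩ G.neighborSet w ⊆ C) : N2 G X ⊆ C := by
  rintro u ⟨x, hx, y, hy, hxy, hux, huy⟩
  exact hX hx hy hxy ⟨hux.symm, huy.symm⟩

end

theorem stmt15_general {V : Type*} (G : SimpleGraph V) (A B : Set V)
    (hbip : BipartiteWith G A B) (hdhp : DHP G A)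
    (hdeg : ∀ v ∈ B, (G.neighborSet v).Finite ∨
      ∃ F : Set V, F ⊆ A ∧ F.Finite ∧ G.neighborSet v = A \ F)
    (hB' : {v ∈ B | ∃ F : Set V, F ⊆ A ∧ F.Finite ∧
      G.neighborSet v = A \ F}.Finite) :
    {v ∈ A | PseudoIsolated G v}.Finite := by
  set B' := {v ∈ B | ∃ F : Set V, F ⊆ A ∧ F.Finite ∧ G.neighborSet v = A \ F}
  by_contra hQ
  have hfinite : ∀ u ∈ B \ B', (G.neighborSet u).Finite := fun u hu =>
    (hdeg u hu.1).resolve_right fun hcof => hu.2 ⟨hu.1, hcof⟩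
  obtain ⟨S, hcard, hSQ, hS⟩ := Set.Infinite.exists_finset_card_eq_pairwise hQ
    (r := fun v w => G.neighborSet v ∩ G.neighborSet w ⊆ B')
    (fun v w h => Set.inter_comm (G.neighborSet w) _ ▸ h)
    (fun v hv => (hv.2.finite_not_inter_neighborSet_subset hbip hfinite hv.1).subset
      fun w hw => ⟨hw.1.1, hw.2⟩)
    (B'.ncard + 2)
  have hSmk : Cardinal.mk (S : Set V) = (B'.ncard + 2 : ℕ) := hcard ▸ Cardinal.mk_coe_finset
  have hle : ((B'.ncard + 2 : ℕ) : Cardinal) ≤ B'.ncard :=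
    calc ((B'.ncard + 2 : ℕ) : Cardinal) = Cardinal.mk (S : Set V) := hSmk.symm
      _ ≤ Cardinal.mk (N2 G S) := hdhp.2 S (fun v hv => (hSQ hv).1)
            (hSmk ▸ mod_cast Nat.le_add_left 2 _)
      _ ≤ Cardinal.mk B' := Cardinal.mk_le_mk_of_subset (N2_subset_of_pairwise hS)
      _ = B'.ncard := (Set.cast_ncard hB').symm
  exact absurd (Nat.cast_le.mp hle) (by omega)

theorem stmt15 {V : Type*} (G : SimpleGraph V) (A B : Set V)
    (hbip : BipartiteWith G A B) (hdhp : DHP G A)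
    (hA : A.Infinite) (hB : B.Infinite)
    (hdeg : ∀ v ∈ B, (G.neighborSet v).Finite ∨
      ∃ F : Set V, F ⊆ A ∧ F.Finite ∧ G.neighborSet v = A \ F)
    (hB' : {v ∈ B | ∃ F : Set V, F ⊆ A ∧ F.Finite ∧
      G.neighborSet v = A \ F}.Finite) :
    {v ∈ A | PseudoIsolated G v}.Finite :=
  stmt15_general G A B hbip hdhp hdeg hB'
end

section
/- There exists a countably infinite bipartite graph G(A,B) satisfying the double Hall property, with both sides A and B infinite, such that all vertices of A except exactly two have finite degree, every vertex of B has infinite degree, and G admits no A-perfect matching (and hence no family of pairwise disjoint cycles covering all vertices of A). -/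
/-!
The example: `A` and `B` are two copies of `ℕ`, the vertices `a₀, a₁` of `A` are joined to all of
`B`, and `aₙ` for `n ≥ 2` is joined to `b₀, …, bₙ₋₁`.

An `A`-perfect matching would give an injection `f : ℕ → ℕ` with `f n < n` for `n ≥ 2`, which the
pigeonhole principle forbids on `{0, …, N}` once `N` exceeds `f 0` and `f 1`.

For the double Hall property, let `X ⊆ A` contain `k ≥ 2` vertices. At most `k - 2` of them are
among `a₂, …, aₖ₋₁`, so two of them are hubs or have index `≥ k`; both are adjacent to
`b₀, …, bₖ₋₁`, whence `|N²(X)| ≥ k`. Since everything is countable, this suffices also for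
infinite `X`.
-/

open Function Set Cardinal

lemma Nat.not_injective_of_lt_self {f : ℕ → ℕ} (m : ℕ) (hf : ∀ n, m ≤ n → f n < n) :
    ¬ Injective f := by
  intro hinj
  set N := (Finset.range m).sup f + m
  have hmaps : ∀ n ∈ Finset.range (N + 1), f n ∈ Finset.range N := by
    intro n hn
    rw [Finset.mem_range] at hn ⊢
    rcases lt_or_ge n m with hnm | hnm
    · have := Finset.le_sup (f := f) (Finset.mem_range.2 hnm)
      omega
    · have := hf n hnm
      omega
  have := Finset.card_le_card_of_injOn f hmaps hinj.injOn
  simp only [Finset.card_range] at this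
  omega

lemma Cardinal.le_of_forall_natCast_le {a b : Cardinal} (ha : a ≤ ℵ₀)
    (h : ∀ n : ℕ, (n : Cardinal) ≤ a → (n : Cardinal) ≤ b) : a ≤ b := by
  rcases ha.lt_or_eq with ha | rfl
  · obtain ⟨n, rfl⟩ := Cardinal.lt_aleph0.1 ha
    exact h n le_rfl
  · exact Cardinal.aleph0_le.2 fun n => h n Cardinal.natCast_lt_aleph0.le

def twoHubGraph : SimpleGraph (ℕ ⊕ ℕ) where
  Adj x y :=
    match x, y with
    | .inl n, .inr j => n ≤ 1 ∨ j < n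
    | .inr j, .inl n => n ≤ 1 ∨ j < n
    | _, _ => False
  symm := ⟨by rintro (n | n) (m | m) h <;> exact h⟩
  loopless := ⟨by rintro (n | n) h <;> exact h⟩

namespace twoHubGraph

open Sum

lemma adj_inl_inr {n j : ℕ} : twoHubGraph.Adj (inl n) (inr j) ↔ n ≤ 1 ∨ j < n := Iff.rfl

lemma not_adj_inl_inl {n m : ℕ} : ¬ twoHubGraph.Adj (inl n) (inl m) := id

lemma not_adj_inr_inr {n m : ℕ} : ¬ twoHubGraph.Adj (inr n) (inr m) := id

lemma bipartiteWith : BipartiteWith twoHubGraph (range inl) (range inr) := by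
  refine ⟨fun v => ?_, ?_, ?_⟩
  · rcases v with n | j
    exacts [.inl ⟨n, rfl⟩, .inr ⟨j, rfl⟩]
  · rw [Set.disjoint_left]
    rintro _ ⟨n, rfl⟩ ⟨j, hj⟩
    exact inr_ne_inl hj
  · rintro (n | n) (m | m) h
    exacts [absurd h not_adj_inl_inl, .inl ⟨⟨n, rfl⟩, ⟨m, rfl⟩⟩, .inr ⟨⟨n, rfl⟩, ⟨m, rfl⟩⟩,
      absurd h not_adj_inr_inr]

lemma neighborSet_inl (n : ℕ) :
    twoHubGraph.neighborSet (inl n) = inr '' {j | n ≤ 1 ∨ j < n} := by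
  ext (m | j)
  · simp [not_adj_inl_inl]
  · simp [adj_inl_inr]

lemma neighborSet_inr (j : ℕ) :
    twoHubGraph.neighborSet (inr j) = inl '' {n | n ≤ 1 ∨ j < n} := by
  ext (n | m)
  · simp [twoHubGraph.adj_comm (inr j), adj_inl_inr]
  · simp [not_adj_inr_inr]

lemma neighborSet_inl_infinite_iff {n : ℕ} :
    (twoHubGraph.neighborSet (inl n)).Infinite ↔ n ≤ 1 := by
  rw [neighborSet_inl, infinite_image_iff inr_injective.injOn]
  by_cases hn : n ≤ 1
  · simpa [hn] using Set.infinite_univ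
  · have : {j | n ≤ 1 ∨ j < n} = Iio n := by ext; simp [hn]
    rw [this]
    simp [hn]

lemma neighborSet_inr_infinite (j : ℕ) : (twoHubGraph.neighborSet (inr j)).Infinite := by
  rw [neighborSet_inr, infinite_image_iff inl_injective.injOn]
  exact (Set.Ioi_infinite j).mono fun n hn => .inr hn

lemma not_exists_isMatching_covering_inl :
    ¬ ∃ M : twoHubGraph.Subgraph, M.IsMatching ∧ range inl ⊆ M.verts := by
  rintro ⟨M, hM, hA⟩
  have partner (n : ℕ) : ∃ j, M.Adj (inl n) (inr j) := by
    obtain ⟨w | j, hw, -⟩ := hM (hA ⟨n, rfl⟩)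
    exacts [absurd (M.adj_sub hw) not_adj_inl_inl, ⟨j, hw⟩]
  choose f hf using partner
  refine Nat.not_injective_of_lt_self 2 (f := f) (fun n hn => ?_) fun a b hab => ?_
  · exact (adj_inl_inr.1 (M.adj_sub (hf n))).resolve_left (by omega)
  · exact inl_injective (hM.eq_of_adj_right (hf a) (hab ▸ hf b))

lemma natCast_le_mk_N2 {X : Set (ℕ ⊕ ℕ)} (hXA : X ⊆ range inl) {k : ℕ} (hk : 2 ≤ k)
    (hkX : (k : Cardinal) ≤ Cardinal.mk X) : (k : Cardinal) ≤ Cardinal.mk (N2 twoHubGraph X) := by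
  classical
  obtain ⟨_, hTX, hTk⟩ := Cardinal.le_mk_iff_exists_subset.1 hkX
  obtain ⟨T, rfl, rfl⟩ := Cardinal.mk_set_eq_nat_iff_finset.1 hTk
  set small := (Finset.Ico 2 T.card).map ⟨inl, inl_injective⟩
  have htwo : 1 < (T \ small).card := by
    have := Finset.le_card_sdiff small T
    have hsmall : small.card = T.card - 2 := by simp [small]
    omega
  obtain ⟨a, ha, b, hb, hab⟩ := Finset.one_lt_card.1 htwo
  have adj_of_mem {v} (hv : v ∈ T \ small) {j} (hj : j < T.card) : twoHubGraph.Adj v (inr j) := by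
    rw [Finset.mem_sdiff] at hv
    obtain ⟨n, rfl⟩ := hXA (hTX hv.1)
    have : n ∉ Finset.Ico 2 T.card := fun h => hv.2 (Finset.mem_map_of_mem _ h)
    rw [Finset.mem_Ico] at this
    exact adj_inl_inr.2 (by omega)
  have hsub : range (fun j : Fin T.card => (inr j : ℕ ⊕ ℕ)) ⊆ N2 twoHubGraph X := by
    rintro _ ⟨j, rfl⟩
    exact ⟨a, hTX (Finset.mem_sdiff.1 ha).1, b, hTX (Finset.mem_sdiff.1 hb).1, hab,
      (adj_of_mem ha j.2).symm, (adj_of_mem hb j.2).symm⟩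
  calc (T.card : Cardinal) = Cardinal.mk (Fin T.card) := (Cardinal.mk_fin _).symm
    _ = _ := (Cardinal.mk_range_eq _ (inr_injective.comp Fin.val_injective)).symm
    _ ≤ _ := Cardinal.mk_le_mk_of_subset hsub

lemma dhp : DHP twoHubGraph (range inl) := by
  refine ⟨?_, fun X hXA hX2 => Cardinal.le_of_forall_natCast_le Cardinal.mk_le_aleph0
    fun n hn => ?_⟩
  · have : Infinite (range (inl : ℕ → ℕ ⊕ ℕ)) :=
      (infinite_range_of_injective inl_injective).to_subtype
    exact Cardinal.natCast_lt_aleph0.le.trans (Cardinal.aleph0_le_mk _)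
  · have hmax : ((max n 2 : ℕ) : Cardinal) ≤ Cardinal.mk X := by
      rcases max_choice n 2 with h | h <;> rwa [h]
    exact le_trans (by exact_mod_cast le_max_left n 2)
      (natCast_le_mk_N2 hXA (le_max_right n 2) hmax)

end twoHubGraph

open twoHubGraph in
theorem stmt18 : ∃ (V : Type) (G : SimpleGraph V) (A B : Set V),
    Countable V ∧ Infinite V ∧ BipartiteWith G A B ∧ DHP G A ∧
    A.Infinite ∧ B.Infinite ∧
    (∃ a b : V, a ≠ b ∧ {v ∈ A | (G.neighborSet v).Infinite} = {a, b}) ∧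
    (∀ v ∈ B, (G.neighborSet v).Infinite) ∧
    ¬ ∃ M : G.Subgraph, M.IsMatching ∧ A ⊆ M.verts := by
  refine ⟨ℕ ⊕ ℕ, twoHubGraph, range .inl, range .inr, inferInstance, inferInstance,
    bipartiteWith, dhp, infinite_range_of_injective Sum.inl_injective,
    infinite_range_of_injective Sum.inr_injective, ⟨.inl 0, .inl 1, by simp, ?_⟩,
    ?_, not_exists_isMatching_covering_inl⟩
  · ext v
    simp only [mem_ofPred_eq, mem_insert_iff, mem_singleton_iff]
    constructor
    · rintro ⟨⟨n, rfl⟩, hinf⟩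
      have := neighborSet_inl_infinite_iff.1 hinf
      interval_cases n <;> simp
    · rintro (rfl | rfl) <;> exact ⟨⟨_, rfl⟩, neighborSet_inl_infinite_iff.2 (by norm_num)⟩
  · rintro _ ⟨j, rfl⟩
    exact neighborSet_inr_infinite j
end
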